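/- arXiv:2104.06592 — 4 statements merged into one kernel-verified Lean document; each statement's English description precedes it below -/
import Mathlib

section
/- For $s \in (-d/2, d/2)$ and functions $f_1, f_2, f_3 \in H^{(s+d)/3}(\mathbb{T}^d)$, the product satisfies $\| f_1 f_2 f_3 \|_{H^s(\mathbb{T}^d)} \lesssim \prod_{j=1}^3 \| f_j \|_{H^{(s+d)/3}(\mathbb{T}^d)}$. -/
/-!
By duality, the estimate amounts to bounding the quadrilinear form
`∑_{x₀ + x₁ + x₂ + x₃ = 0} ∏ᵢ ⟨xᵢ⟩^{2tᵢ} Gᵢ(xᵢ)` by `∏ᵢ ‖Gᵢ‖_{ℓ²}`, with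
`t = (-σ/2, -σ/2, -σ/2, s/2)` and `σ = (s + d)/3`: then `∑ tᵢ = -d/2`, and `|s| < d/2` says exactly
that every `tᵢ > -d/4`. Order the four frequencies by size. The largest is minus the sum of the
other three, so it is comparable to the second largest, and its weight can be moved onto that one.
Cauchy–Schwarz then reduces everything to the lattice sum bound `∑_{⟨y⟩ ≤ ⟨u⟩} ⟨y⟩^{4t} ≲ ⟨u⟩^{d + 4t}`
(valid for `4t > -d`, by dyadic decomposition) applied to the two smallest frequencies, and the
exponents then cancel because `∑ tᵢ = -d/2`.
-/

open scoped ENNReal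

/-- Japanese bracket weight `⟨ξ⟩^{2s} = (1 + |ξ|²)^s` for `ξ ∈ ℤᵈ`. -/
noncomputable def sobWeight {d : ℕ} (s : ℝ) (ξ : Fin d → ℤ) : ℝ :=
  (1 + ∑ i, ((ξ i : ℝ)) ^ 2) ^ s

/-- The `Hˢ(𝕋ᵈ)` norm via Fourier coefficients, valued in `ℝ≥0∞`. -/
noncomputable def sobNorm (d : ℕ) (s : ℝ) (f : (Fin d → ℤ) → ℂ) : ℝ≥0∞ :=
  (∑' ξ : Fin d → ℤ, ENNReal.ofReal (sobWeight s ξ * ‖f ξ‖ ^ 2)) ^ (1/2 : ℝ)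

/-- Fourier coefficients of the product `f₁ f₂ f₃` on `𝕋ᵈ`: the triple convolution. -/
noncomputable def tripleProd (d : ℕ) (f₁ f₂ f₃ : (Fin d → ℤ) → ℂ) :
    (Fin d → ℤ) → ℂ :=
  fun ξ => ∑' p : (Fin d → ℤ) × (Fin d → ℤ),
    f₁ p.1 * f₂ p.2 * f₃ (ξ - p.1 - p.2)

open scoped NNReal

namespace SobolevTrilinear

section L2

variable {α β γ : Type*}

noncomputable def l2Norm (F : α → ℝ≥0∞) : ℝ≥0∞ := (∑' a, F a ^ 2) ^ (1 / 2 : ℝ)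

lemma l2Norm_pow_two (F : α → ℝ≥0∞) : l2Norm F ^ 2 = ∑' a, F a ^ 2 := by
  rw [l2Norm, ← ENNReal.rpow_natCast, ← ENNReal.rpow_mul]
  norm_num

lemma l2Norm_le_iff {F : α → ℝ≥0∞} {K : ℝ≥0∞} : l2Norm F ≤ K ↔ ∑' a, F a ^ 2 ≤ K ^ 2 := by
  rw [← l2Norm_pow_two, ENNReal.pow_le_pow_left_iff two_ne_zero]

lemma l2Norm_comp_equiv (e : β ≃ α) (F : α → ℝ≥0∞) : l2Norm (F ∘ e) = l2Norm F := by
  rw [l2Norm, l2Norm, ← e.tsum_eq]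
  rfl

lemma tsum_prod_mul (F : α → ℝ≥0∞) (G : β → ℝ≥0∞) :
    ∑' p : α × β, F p.1 * G p.2 = (∑' a, F a) * ∑' b, G b := by
  simp_rw [ENNReal.tsum_prod', ENNReal.tsum_mul_left, ENNReal.tsum_mul_right]

lemma l2Norm_prod_mul (F : α → ℝ≥0∞) (G : β → ℝ≥0∞) :
    l2Norm (fun p : α × β => F p.1 * G p.2) = l2Norm F * l2Norm G := by
  simp only [l2Norm, mul_pow]
  rw [tsum_prod_mul (F · ^ 2) (G · ^ 2), ENNReal.mul_rpow_of_nonneg _ _ (by norm_num)]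

lemma tsum_mul_le_l2Norm_mul (F G : α → ℝ≥0∞) : ∑' a, F a * G a ≤ l2Norm F * l2Norm G := by
  let _ : MeasurableSpace α := ⊤
  have h := ENNReal.lintegral_mul_le_Lp_mul_Lq MeasureTheory.Measure.count
    Real.HolderConjugate.two_two Measurable.of_discrete.aemeasurable
    Measurable.of_discrete.aemeasurable (f := F) (g := G)
  simp only [MeasureTheory.lintegral_count, Pi.mul_apply] at h
  simpa [l2Norm, ENNReal.rpow_two] using h

lemma l2Norm_le_of_tsum_mul_le {F : α → ℝ≥0∞} (hF : ∀ a, F a ≠ ⊤) {K : ℝ≥0∞}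
    (h : ∀ H : α → ℝ≥0∞, ∑' a, F a * H a ≤ K * l2Norm H) : l2Norm F ≤ K := by
  classical
  rw [l2Norm_le_iff, ENNReal.tsum_eq_iSup_sum]
  refine iSup_le fun A => ?_
  set H : α → ℝ≥0∞ := fun a => if a ∈ A then F a else 0
  have hH : ∑' a, H a ^ 2 = ∑ a ∈ A, F a ^ 2 := by
    rw [tsum_eq_sum (s := A) fun a ha => by simp [H, ha]]
    exact Finset.sum_congr rfl fun a ha => by simp [H, ha]
  have hFH : ∑' a, F a * H a = l2Norm H ^ 2 := by
    rw [l2Norm_pow_two]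
    exact tsum_congr fun a => by by_cases ha : a ∈ A <;> simp [H, ha, sq]
  have hfin : l2Norm H ≠ ⊤ := by
    rw [l2Norm, hH]
    exact ENNReal.rpow_ne_top_of_nonneg (by norm_num)
      (ENNReal.sum_ne_top.2 fun a _ => ENNReal.pow_ne_top (hF a))
  have hle : l2Norm H ≤ K := by
    rcases eq_or_ne (l2Norm H) 0 with h0 | h0
    · exact h0 ▸ zero_le
    · rw [← ENNReal.mul_le_mul_iff_left h0 hfin, ← sq, ← hFH]
      exact h H
  rw [← hH, ← l2Norm_pow_two]
  exact pow_le_pow_left₀ zero_le hle 2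

lemma l2Norm_le_sqrt {F : α → ℝ≥0∞} {A : ℝ≥0∞} (h : ∑' a, F a ^ 2 ≤ A) :
    l2Norm F ≤ A ^ (1 / 2 : ℝ) :=
  ENNReal.rpow_le_rpow h (by norm_num)

lemma tsum_tsum_kernel_mul_le {k : α → β → ℝ≥0∞} {φ : α → β → γ}
    (hφ : ∀ b, Function.Injective (φ · b)) {A : ℝ≥0∞} (hk : ∀ a, ∑' b, k a b ^ 2 ≤ A)
    (F : α → ℝ≥0∞) (H : β → ℝ≥0∞) (G : γ → ℝ≥0∞) :
    ∑' a, ∑' b, k a b * F a * H b * G (φ a b)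
      ≤ A ^ (1 / 2 : ℝ) * (l2Norm F * l2Norm H * l2Norm G) := by
  set P : α → ℝ≥0∞ := fun a => l2Norm fun b => H b * G (φ a b)
  have hP : l2Norm P ≤ l2Norm H * l2Norm G := by
    rw [l2Norm_le_iff, mul_pow, l2Norm_pow_two, l2Norm_pow_two, ← ENNReal.tsum_mul_right]
    simp_rw [P, l2Norm_pow_two, mul_pow]
    rw [ENNReal.tsum_comm]
    gcongr with b
    rw [ENNReal.tsum_mul_left]
    gcongr
    exact ENNReal.tsum_comp_le_tsum_of_injective (hφ b) _
  calc ∑' a, ∑' b, k a b * F a * H b * G (φ a b)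
      = ∑' a, F a * ∑' b, k a b * (H b * G (φ a b)) := by
        refine tsum_congr fun a => ?_
        rw [← ENNReal.tsum_mul_left]
        exact tsum_congr fun b => by ring
    _ ≤ ∑' a, F a * (A ^ (1 / 2 : ℝ) * P a) := by
        gcongr with a
        exact (tsum_mul_le_l2Norm_mul _ _).trans (by gcongr; exact l2Norm_le_sqrt (hk a))
    _ = A ^ (1 / 2 : ℝ) * ∑' a, F a * P a := by
        rw [← ENNReal.tsum_mul_left]
        exact tsum_congr fun a => by ring
    _ ≤ A ^ (1 / 2 : ℝ) * (l2Norm F * (l2Norm H * l2Norm G)) := by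
        gcongr
        exact (tsum_mul_le_l2Norm_mul _ _).trans (by gcongr)
    _ = A ^ (1 / 2 : ℝ) * (l2Norm F * l2Norm H * l2Norm G) := by ring

lemma tsum_indicator_eq_tsum_comp {s : Set α} {g : β → α}
    (hg : Function.Injective g) (hs : Set.range g = s) (f : α → ℝ≥0∞) :
    ∑' a, s.indicator f a = ∑' b, f (g b) := by
  rw [← tsum_subtype, ← hs, tsum_range f hg]

end L2

lemma rpow_le_rpow_abs_mul_rpow {u w c : ℝ} (e : ℝ) (hu : 0 < u) (hc : 1 ≤ c)
    (h₁ : u ≤ c * w) (h₂ : w ≤ c * u) : w ^ e ≤ c ^ |e| * u ^ e := by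
  have hc₀ : 0 < c := one_pos.trans_le hc
  have hw : 0 < w := pos_of_mul_pos_right (hu.trans_le h₁) hc₀.le
  rcases le_or_gt 0 e with he | he
  · calc w ^ e ≤ (c * u) ^ e := Real.rpow_le_rpow hw.le h₂ he
      _ = c ^ e * u ^ e := Real.mul_rpow hc₀.le hu.le
      _ ≤ c ^ |e| * u ^ e := by
          gcongr
          exact le_abs_self e
  · calc w ^ e ≤ (c⁻¹ * u) ^ e := by
          refine Real.rpow_le_rpow_of_nonpos (by positivity) ?_ he.le
          rw [inv_mul_le_iff₀ hc₀]
          exact h₁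
      _ = c ^ |e| * u ^ e := by
          rw [Real.mul_rpow (by positivity) hu.le, Real.inv_rpow hc₀.le, ← Real.rpow_neg hc₀.le,
            abs_of_neg he]

variable {d : ℕ}

noncomputable def bracketSq (x : Fin d → ℤ) : ℝ := 1 + ∑ i, (x i : ℝ) ^ 2

lemma one_le_bracketSq (x : Fin d → ℤ) : 1 ≤ bracketSq x :=
  le_add_of_nonneg_right (Finset.sum_nonneg fun _ _ => sq_nonneg _)

lemma bracketSq_pos (x : Fin d → ℤ) : 0 < bracketSq x := one_pos.trans_le (one_le_bracketSq x)

@[simp]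
lemma bracketSq_neg (x : Fin d → ℤ) : bracketSq (-x) = bracketSq x := by
  simp [bracketSq]

lemma bracketSq_add_add_le (a b c : Fin d → ℤ) :
    bracketSq (a + b + c) ≤ 3 * (bracketSq a + bracketSq b + bracketSq c) := by
  have h : ∀ i,
      (((a + b + c) i : ℤ) : ℝ) ^ 2 ≤ 3 * ((a i : ℝ) ^ 2 + (b i : ℝ) ^ 2 + (c i : ℝ) ^ 2) :=
    fun i => by
      push_cast [Pi.add_apply]
      nlinarith [sq_nonneg ((a i : ℝ) - b i), sq_nonneg ((a i : ℝ) - c i),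
        sq_nonneg ((b i : ℝ) - c i)]
  have hsum := Finset.sum_le_sum (s := Finset.univ) fun i _ => h i
  simp only [← Finset.mul_sum, Finset.sum_add_distrib] at hsum
  simp only [bracketSq]
  linarith

lemma bracketSq_neg_add_le {a b u : Fin d → ℤ} (ha : bracketSq a ≤ bracketSq u)
    (hb : bracketSq b ≤ bracketSq u) : bracketSq (-(a + b + u)) ≤ 9 * bracketSq u := by
  rw [bracketSq_neg]
  linarith [bracketSq_add_add_le a b u]

/-- The weight `⟨x⟩^{2t} = (1 + |x|²)^t`. -/
noncomputable def weight (t : ℝ) (x : Fin d → ℤ) : ℝ≥0∞ := ENNReal.ofReal (bracketSq x ^ t)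

lemma weight_ne_top (t : ℝ) (x : Fin d → ℤ) : weight t x ≠ ⊤ := ENNReal.ofReal_ne_top

@[simp]
lemma weight_zero (x : Fin d → ℤ) : weight 0 x = 1 := by simp [weight]

@[simp]
lemma weight_neg (t : ℝ) (x : Fin d → ℤ) : weight t (-x) = weight t x := by
  simp [weight]

lemma weight_mul_weight (a b : ℝ) (x : Fin d → ℤ) : weight a x * weight b x = weight (a + b) x := by
  rw [weight, weight, weight, Real.rpow_add (bracketSq_pos x),
    ENNReal.ofReal_mul (Real.rpow_nonneg (bracketSq_pos x).le _)]

lemma weight_pow_two (t : ℝ) (x : Fin d → ℤ) : weight t x ^ 2 = weight (2 * t) x := by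
  rw [sq, weight_mul_weight, two_mul]

lemma weight_neg_mul_weight (t : ℝ) (x : Fin d → ℤ) : weight (-t) x * weight t x = 1 := by
  rw [weight_mul_weight, neg_add_cancel, weight_zero]

lemma weight_le_of_comparable (e : ℝ) {x u : Fin d → ℤ} {c : ℝ} (hc : 1 ≤ c)
    (h₁ : bracketSq u ≤ c * bracketSq x) (h₂ : bracketSq x ≤ c * bracketSq u) :
    weight e x ≤ ENNReal.ofReal (c ^ |e|) * weight e u := by
  rw [weight, weight, ← ENNReal.ofReal_mul (by positivity)]
  exact ENNReal.ofReal_le_ofReal (rpow_le_rpow_abs_mul_rpow e (bracketSq_pos u) hc h₁ h₂)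

lemma sobNorm_eq_l2Norm (s : ℝ) (f : (Fin d → ℤ) → ℂ) :
    sobNorm d s f = l2Norm fun ξ => weight (s / 2) ξ * ‖f ξ‖ₑ := by
  refine congrArg (· ^ (1 / 2 : ℝ)) (tsum_congr fun ξ => ?_)
  change ENNReal.ofReal (bracketSq ξ ^ s * ‖f ξ‖ ^ 2) = _
  rw [mul_pow, weight_pow_two, mul_div_cancel₀ s two_ne_zero, weight,
    ENNReal.ofReal_mul (Real.rpow_nonneg (bracketSq_pos ξ).le _),
    ENNReal.ofReal_pow (norm_nonneg _), ofReal_norm]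

noncomputable def truncWeight (e M : ℝ) (x : Fin d → ℤ) : ℝ≥0∞ :=
  if bracketSq x ≤ M then weight e x else 0

lemma truncWeight_le_one (M : ℝ) (x : Fin d → ℤ) : truncWeight 0 M x ≤ 1 := by
  unfold truncWeight
  split_ifs <;> simp

lemma truncWeight_eq_zero_of_lt_one {M : ℝ} (hM : M < 1) (e : ℝ) (x : Fin d → ℤ) :
    truncWeight e M x = 0 :=
  if_neg (hM.trans_le (one_le_bracketSq x)).not_ge

lemma truncWeight_pow_two (e M : ℝ) (x : Fin d → ℤ) :
    truncWeight e M x ^ 2 = truncWeight (2 * e) M x := by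
  unfold truncWeight
  split_ifs <;> simp [weight_pow_two]

lemma tsum_truncWeight_zero_le {L : ℝ} (hL : 1 ≤ L) :
    ∑' x : Fin d → ℤ, truncWeight 0 L x ≤ ENNReal.ofReal (3 ^ d * L ^ ((d : ℝ) / 2)) := by
  classical
  set m : ℕ := ⌊√L⌋₊
  set B : Finset (Fin d → ℤ) := Fintype.piFinset fun _ => Finset.Icc (-(m : ℤ)) m
  have hsupp : ∀ x ∉ B, truncWeight 0 L x = 0 := by
    refine fun x hx => if_neg fun hL' => hx ?_
    refine Fintype.mem_piFinset.2 fun i => Finset.mem_Icc.2 (abs_le.1 ?_)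
    have hi : (x i : ℝ) ^ 2 ≤ L := by
      have := Finset.single_le_sum (fun j _ => sq_nonneg ((x j : ℝ))) (Finset.mem_univ i)
      unfold bracketSq at hL'
      linarith
    have : ((x i).natAbs : ℝ) ≤ √L := by
      rw [Nat.cast_natAbs, Int.cast_abs]
      exact Real.abs_le_sqrt hi
    rw [Int.abs_eq_natAbs]
    exact_mod_cast Nat.le_floor this
  have hm : (m : ℝ) ≤ √L := Nat.floor_le (Real.sqrt_nonneg L)
  have hL' : 1 ≤ √L := Real.one_le_sqrt.2 hL
  calc ∑' x, truncWeight 0 L x = ∑ x ∈ B, truncWeight 0 L x := tsum_eq_sum hsupp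
    _ ≤ ∑ _x ∈ B, 1 := Finset.sum_le_sum fun x _ => truncWeight_le_one L x
    _ = ENNReal.ofReal (((2 * m + 1 : ℕ) : ℝ) ^ d) := by
        rw [Finset.sum_const, nsmul_one, Fintype.card_piFinset, Finset.prod_const, Int.card_Icc,
          Finset.card_univ, Fintype.card_fin, ← Nat.cast_pow, ENNReal.ofReal_natCast]
        congr
        omega
    _ ≤ ENNReal.ofReal ((3 * √L) ^ d) := by
        gcongr
        push_cast
        linarith
    _ = ENNReal.ofReal (3 ^ d * L ^ ((d : ℝ) / 2)) := by
        rw [mul_pow, Real.sqrt_eq_rpow, ← Real.rpow_natCast (L ^ _), ← Real.rpow_mul (by linarith)]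
        ring_nf

lemma truncWeight_le_half_add (e : ℝ) {M : ℝ} (hM : 0 < M) (x : Fin d → ℤ) :
    truncWeight e M x
      ≤ truncWeight e (M / 2) x + ENNReal.ofReal (2 ^ |e| * M ^ e) * truncWeight 0 M x := by
  by_cases hhalf : bracketSq x ≤ M / 2
  · have hM' : bracketSq x ≤ M := hhalf.trans (by linarith)
    simp [truncWeight, hhalf, hM']
  by_cases hx : bracketSq x ≤ M
  · simp only [truncWeight, hhalf, hx, if_true, if_false, weight_zero, mul_one, zero_add]
    exact ENNReal.ofReal_le_ofReal
      (rpow_le_rpow_abs_mul_rpow e hM one_le_two (by linarith) (by linarith [bracketSq_pos x]))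
  · simp [truncWeight, hx]

lemma tsum_truncWeight_le_half_add (e : ℝ) {M : ℝ} (hM : 1 ≤ M) :
    ∑' x : Fin d → ℤ, truncWeight e M x
      ≤ ∑' x : Fin d → ℤ, truncWeight e (M / 2) x
        + ENNReal.ofReal (2 ^ |e| * 3 ^ d * M ^ ((d : ℝ) / 2 + e)) :=
  calc ∑' x : Fin d → ℤ, truncWeight e M x
      ≤ ∑' x, (truncWeight e (M / 2) x + ENNReal.ofReal (2 ^ |e| * M ^ e) * truncWeight 0 M x) :=
        ENNReal.tsum_le_tsum (truncWeight_le_half_add e (by linarith))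
    _ = ∑' x, truncWeight e (M / 2) x
          + ENNReal.ofReal (2 ^ |e| * M ^ e) * ∑' x, truncWeight 0 M x := by
        rw [ENNReal.tsum_add, ENNReal.tsum_mul_left]
    _ ≤ ∑' x, truncWeight e (M / 2) x
          + ENNReal.ofReal (2 ^ |e| * M ^ e) * ENNReal.ofReal (3 ^ d * M ^ ((d : ℝ) / 2)) := by
        gcongr
        exact tsum_truncWeight_zero_le hM
    _ = ∑' x, truncWeight e (M / 2) x
          + ENNReal.ofReal (2 ^ |e| * 3 ^ d * M ^ ((d : ℝ) / 2 + e)) := by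
        rw [← ENNReal.ofReal_mul (by positivity), Real.rpow_add (by linarith)]
        ring_nf

lemma exists_tsum_truncWeight_le {e : ℝ} (he : -((d : ℝ) / 2) < e) :
    ∃ C : ℝ≥0, ∀ M : ℝ,
      ∑' x : Fin d → ℤ, truncWeight e M x ≤ C * ENNReal.ofReal (M ^ ((d : ℝ) / 2 + e)) := by
  have hκ : 0 < (d : ℝ) / 2 + e := by linarith
  set κ : ℝ := (d : ℝ) / 2 + e
  set r : ℝ := 2 ^ κ
  have hr : 1 < r := Real.one_lt_rpow one_lt_two hκ
  set c : ℝ := 2 ^ |e| * 3 ^ d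
  set C : ℝ := c * r / (r - 1)
  have hC : C / r + c = C := by
    simp only [C]
    field_simp [(by linarith : r - 1 ≠ 0)]
    ring
  -- The bound at `M` follows from the bound at `M / 2`, and holds trivially below `1`.
  let bound : ℝ → Prop := fun M =>
    ∑' x : Fin d → ℤ, truncWeight e M x ≤ ENNReal.ofReal (C * M ^ κ)
  have small : ∀ M < 1, bound M := fun M hM => by
    simp [bound, truncWeight_eq_zero_of_lt_one hM]
  have step : ∀ M, bound (M / 2) → bound M := by
    intro M hhalf
    rcases lt_or_ge M 1 with hM | hM
    · exact small M hM
    calc ∑' x, truncWeight e M x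
        ≤ ∑' x, truncWeight e (M / 2) x + ENNReal.ofReal (c * M ^ κ) :=
          tsum_truncWeight_le_half_add e hM
      _ ≤ ENNReal.ofReal (C * (M / 2) ^ κ) + ENNReal.ofReal (c * M ^ κ) := by gcongr
      _ = ENNReal.ofReal (C * M ^ κ) := by
          have hMκ : (M / 2) ^ κ = M ^ κ / r :=
            Real.div_rpow (by linarith) zero_le_two κ
          rw [← ENNReal.ofReal_add (by positivity) (by positivity), hMκ]
          congr 1
          linear_combination M ^ κ * hC
  have dyadic : ∀ n : ℕ, ∀ M ≤ (2 : ℝ) ^ n, bound M := by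
    intro n
    induction n with
    | zero => exact fun M hM => step M (small _ (by simp at hM; linarith))
    | succ n ih => exact fun M hM => step M (ih _ (by rw [pow_succ] at hM; linarith))
  refine ⟨C.toNNReal, fun M => ?_⟩
  obtain ⟨n, hn⟩ := pow_unbounded_of_one_lt M one_lt_two
  rw [ENNReal.ofNNReal_toNNReal, ← ENNReal.ofReal_mul (by positivity)]
  exact dyadic n M hn.le

def sumZero (d : ℕ) : Set (Fin 4 → Fin d → ℤ) := {x | ∑ i, x i = 0}

def sorted : Set (Fin 4 → Fin d → ℤ) := {x | Monotone (bracketSq ∘ x)}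

noncomputable def quadTerm (t : Fin 4 → ℝ) (G : Fin 4 → (Fin d → ℤ) → ℝ≥0∞)
    (x : Fin 4 → Fin d → ℤ) : ℝ≥0∞ :=
  ∏ i, weight (t i) (x i) * G i (x i)

lemma quadTerm_comp_perm (t : Fin 4 → ℝ) (G : Fin 4 → (Fin d → ℤ) → ℝ≥0∞)
    (π : Equiv.Perm (Fin 4)) (x : Fin 4 → Fin d → ℤ) :
    quadTerm (t ∘ π) (G ∘ π) (x ∘ π) = quadTerm t G x :=
  Equiv.prod_comp π fun i => weight (t i) (x i) * G i (x i)

lemma tsum_sumZero_eq (f : (Fin 4 → Fin d → ℤ) → ℝ≥0∞) :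
    ∑' x, (sumZero d).indicator f x
      = ∑' u, ∑' q : (Fin d → ℤ) × (Fin d → ℤ), f ![q.1, q.2, u, -(q.1 + q.2 + u)] := by
  rw [← ENNReal.tsum_prod (f := fun u (q : (Fin d → ℤ) × (Fin d → ℤ)) =>
    f ![q.1, q.2, u, -(q.1 + q.2 + u)])]
  refine tsum_indicator_eq_tsum_comp (g := fun p : (Fin d → ℤ) × (Fin d → ℤ) × (Fin d → ℤ) =>
    ![p.2.1, p.2.2, p.1, -(p.2.1 + p.2.2 + p.1)]) (fun p p' h => ?_) ?_ f
  · have h₀ := congrFun h 0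
    have h₁ := congrFun h 1
    have h₂ := congrFun h 2
    simp only [Matrix.cons_val] at h₀ h₁ h₂
    exact Prod.ext h₂ (Prod.ext h₀ h₁)
  · ext x
    simp only [Set.mem_range, sumZero, Set.mem_ofPred_eq, Fin.sum_univ_four]
    constructor
    · rintro ⟨p, rfl⟩
      simp
    · intro hx
      refine ⟨(x 2, x 0, x 1), funext fun i => ?_⟩
      fin_cases i <;> simp
      linear_combination (-1 : ℤ) • hx

noncomputable def sortedKernel (t : Fin 4 → ℝ) (u : Fin d → ℤ) (q : (Fin d → ℤ) × (Fin d → ℤ)) :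
    ℝ≥0∞ :=
  truncWeight (t 0) (bracketSq u) q.1 * truncWeight (t 1) (bracketSq u) q.2
    * (ENNReal.ofReal (9 ^ |t 3|) * weight (t 2 + t 3) u)

/-- On `sorted` the two largest frequencies `x 2` and `x 3` are comparable, so the weight of `x 3`
can be moved onto `x 2`. -/
lemma indicator_sorted_quadTerm_le (t : Fin 4 → ℝ) (G : Fin 4 → (Fin d → ℤ) → ℝ≥0∞)
    (u : Fin d → ℤ) (q : (Fin d → ℤ) × (Fin d → ℤ)) :
    sorted.indicator (quadTerm t G) ![q.1, q.2, u, -(q.1 + q.2 + u)]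
      ≤ sortedKernel t u q * G 2 u * (G 0 q.1 * G 1 q.2) * G 3 (-(q.1 + q.2 + u)) := by
  by_cases hx : ![q.1, q.2, u, -(q.1 + q.2 + u)] ∈ sorted
  swap
  · rw [Set.indicator_of_notMem hx]
    exact zero_le
  rw [Set.indicator_of_mem hx]
  have ha : bracketSq q.1 ≤ bracketSq u := by simpa using hx (show (0 : Fin 4) ≤ 2 by decide)
  have hb : bracketSq q.2 ≤ bracketSq u := by simpa using hx (show (1 : Fin 4) ≤ 2 by decide)
  have hv : bracketSq u ≤ bracketSq (-(q.1 + q.2 + u)) := by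
    simpa using hx (show (2 : Fin 4) ≤ 3 by decide)
  have h₃ : weight (t 3) (-(q.1 + q.2 + u)) ≤ ENNReal.ofReal (9 ^ |t 3|) * weight (t 3) u :=
    weight_le_of_comparable (t 3) (by norm_num)
      (by linarith [bracketSq_pos (-(q.1 + q.2 + u))]) (bracketSq_neg_add_le ha hb)
  simp only [quadTerm, Fin.prod_univ_four, Matrix.cons_val, sortedKernel, truncWeight, if_pos ha,
    if_pos hb, ← weight_mul_weight]
  calc _ ≤ weight (t 0) q.1 * G 0 q.1 * (weight (t 1) q.2 * G 1 q.2) * (weight (t 2) u * G 2 u)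
        * (ENNReal.ofReal (9 ^ |t 3|) * weight (t 3) u * G 3 (-(q.1 + q.2 + u))) := by gcongr
    _ = _ := by ring

lemma exists_tsum_sortedKernel_sq_le {t : Fin 4 → ℝ} (h₀ : -((d : ℝ) / 4) < t 0)
    (h₁ : -((d : ℝ) / 4) < t 1) (hsum : ∑ i, t i = -((d : ℝ) / 2)) :
    ∃ A : ℝ≥0, ∀ u : Fin d → ℤ, ∑' q, sortedKernel t u q ^ 2 ≤ A := by
  obtain ⟨C₀, hC₀⟩ := exists_tsum_truncWeight_le (d := d) (e := 2 * t 0) (by linarith)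
  obtain ⟨C₁, hC₁⟩ := exists_tsum_truncWeight_le (d := d) (e := 2 * t 1) (by linarith)
  set c : ℝ≥0∞ := ENNReal.ofReal (9 ^ |t 3|)
  refine ⟨C₀ * C₁ * (c ^ 2).toNNReal, fun u => ?_⟩
  have hexp : ((d : ℝ) / 2 + 2 * t 0) + ((d : ℝ) / 2 + 2 * t 1) + 2 * (t 2 + t 3) = 0 := by
    rw [Fin.sum_univ_four] at hsum
    linarith
  calc ∑' q, sortedKernel t u q ^ 2
      = (∑' a : Fin d → ℤ, truncWeight (2 * t 0) (bracketSq u) a)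
          * (∑' b : Fin d → ℤ, truncWeight (2 * t 1) (bracketSq u) b)
          * (c ^ 2 * weight (2 * (t 2 + t 3)) u) := by
        simp only [sortedKernel, mul_pow, truncWeight_pow_two, weight_pow_two]
        rw [ENNReal.tsum_mul_right, tsum_prod_mul]
    _ ≤ (C₀ * weight ((d : ℝ) / 2 + 2 * t 0) u) * (C₁ * weight ((d : ℝ) / 2 + 2 * t 1) u)
          * (c ^ 2 * weight (2 * (t 2 + t 3)) u) := by
        gcongr
        exacts [hC₀ _, hC₁ _]
    _ = C₀ * C₁ * c ^ 2 * (weight ((d : ℝ) / 2 + 2 * t 0) u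
          * weight ((d : ℝ) / 2 + 2 * t 1) u * weight (2 * (t 2 + t 3)) u) := by ring
    _ = C₀ * C₁ * (c ^ 2).toNNReal := by
        rw [weight_mul_weight, weight_mul_weight, hexp, weight_zero, mul_one,
          ENNReal.coe_toNNReal (by finiteness)]

lemma exists_tsum_quadTerm_sorted_le {t : Fin 4 → ℝ} (h₀ : -((d : ℝ) / 4) < t 0)
    (h₁ : -((d : ℝ) / 4) < t 1) (hsum : ∑ i, t i = -((d : ℝ) / 2)) :
    ∃ C : ℝ≥0, ∀ G : Fin 4 → (Fin d → ℤ) → ℝ≥0∞,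
      ∑' x, (sumZero d).indicator (sorted.indicator (quadTerm t G)) x
        ≤ C * ∏ i, l2Norm (G i) := by
  obtain ⟨A, hA⟩ := exists_tsum_sortedKernel_sq_le h₀ h₁ hsum
  refine ⟨A ^ (1 / 2 : ℝ), fun G => ?_⟩
  have hφ : ∀ q : (Fin d → ℤ) × (Fin d → ℤ), Function.Injective (fun u => -(q.1 + q.2 + u)) :=
    fun q u u' h => add_left_cancel (neg_injective h)
  rw [tsum_sumZero_eq]
  calc ∑' u, ∑' q : (Fin d → ℤ) × (Fin d → ℤ),
        sorted.indicator (quadTerm t G) ![q.1, q.2, u, -(q.1 + q.2 + u)]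
      ≤ ∑' u, ∑' q, sortedKernel t u q * G 2 u * (G 0 q.1 * G 1 q.2) * G 3 (-(q.1 + q.2 + u)) :=
        ENNReal.tsum_le_tsum fun u => ENNReal.tsum_le_tsum (indicator_sorted_quadTerm_le t G u)
    _ ≤ (A : ℝ≥0∞) ^ (1 / 2 : ℝ)
          * (l2Norm (G 2) * l2Norm (fun q : (Fin d → ℤ) × (Fin d → ℤ) => G 0 q.1 * G 1 q.2)
            * l2Norm (G 3)) :=
        tsum_tsum_kernel_mul_le hφ hA (G 2) (fun q => G 0 q.1 * G 1 q.2) (G 3)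
    _ = (A ^ (1 / 2 : ℝ) : ℝ≥0) * ∏ i, l2Norm (G i) := by
        rw [ENNReal.coe_rpow_of_nonneg _ (by norm_num), l2Norm_prod_mul, Fin.prod_univ_four]
        ring

lemma tsum_indicator_sorted_comp_perm (t : Fin 4 → ℝ) (G : Fin 4 → (Fin d → ℤ) → ℝ≥0∞)
    (π : Equiv.Perm (Fin 4)) :
    ∑' x, (sumZero d).indicator (((· ∘ π) ⁻¹' sorted).indicator (quadTerm t G)) x
      = ∑' y, (sumZero d).indicator (sorted.indicator (quadTerm (t ∘ π) (G ∘ π))) y := by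
  let e : (Fin 4 → Fin d → ℤ) ≃ (Fin 4 → Fin d → ℤ) :=
    ⟨(· ∘ π), (· ∘ π.symm), fun x => by ext; simp, fun x => by ext; simp⟩
  conv_rhs => rw [← e.tsum_eq]
  refine tsum_congr fun x => ?_
  change _ = (sumZero d).indicator _ (x ∘ π)
  have hq : quadTerm t G = quadTerm (t ∘ π) (G ∘ π) ∘ (· ∘ π) :=
    funext fun x => (quadTerm_comp_perm t G π x).symm
  have hs : x ∘ π ∈ sumZero d ↔ x ∈ sumZero d := by
    simp only [sumZero, Set.mem_ofPred_eq, Function.comp_apply, Equiv.sum_comp π x]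
  by_cases hx : x ∈ sumZero d
  · rw [Set.indicator_of_mem hx, Set.indicator_of_mem (hs.2 hx), hq, Set.indicator_comp_right]
  · rw [Set.indicator_of_notMem hx, Set.indicator_of_notMem (mt hs.1 hx)]

lemma exists_tsum_quadTerm_le {t : Fin 4 → ℝ} (ht : ∀ i, -((d : ℝ) / 4) < t i)
    (hsum : ∑ i, t i = -((d : ℝ) / 2)) :
    ∃ C : ℝ≥0, ∀ G : Fin 4 → (Fin d → ℤ) → ℝ≥0∞,
      ∑' x, (sumZero d).indicator (quadTerm t G) x ≤ C * ∏ i, l2Norm (G i) := by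
  have hsorted : ∀ π : Equiv.Perm (Fin 4), ∃ C : ℝ≥0, ∀ G : Fin 4 → (Fin d → ℤ) → ℝ≥0∞,
      ∑' x, (sumZero d).indicator (sorted.indicator (quadTerm (t ∘ π) G)) x
        ≤ C * ∏ i, l2Norm (G i) := fun π =>
    exists_tsum_quadTerm_sorted_le (ht _) (ht _) ((Equiv.sum_comp π t).trans hsum)
  choose C hC using hsorted
  refine ⟨∑ π, C π, fun G => ?_⟩
  -- Every tuple becomes sorted after a suitable permutation of its entries.
  have hcover : ∀ x, (sumZero d).indicator (quadTerm t G) x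
      ≤ ∑ π : Equiv.Perm (Fin 4),
          (sumZero d).indicator (((· ∘ π) ⁻¹' sorted).indicator (quadTerm t G)) x := by
    intro x
    have hx : x ∘ Tuple.sort (bracketSq ∘ x) ∈ sorted := Tuple.monotone_sort (bracketSq ∘ x)
    refine le_trans (le_of_eq ?_) (Finset.single_le_sum (fun π _ => zero_le)
      (Finset.mem_univ (Tuple.sort (bracketSq ∘ x))))
    classical
    simp only [Set.indicator_apply, Set.mem_preimage, hx, if_true]
  calc ∑' x, (sumZero d).indicator (quadTerm t G) x
      ≤ ∑' x, ∑ π : Equiv.Perm (Fin 4),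
          (sumZero d).indicator (((· ∘ π) ⁻¹' sorted).indicator (quadTerm t G)) x :=
        ENNReal.tsum_le_tsum hcover
    _ = ∑ π : Equiv.Perm (Fin 4),
          ∑' y, (sumZero d).indicator (sorted.indicator (quadTerm (t ∘ π) (G ∘ π))) y := by
        rw [Summable.tsum_finsetSum fun _ _ => ENNReal.summable]
        exact Finset.sum_congr rfl fun π _ => tsum_indicator_sorted_comp_perm t G π
    _ ≤ ∑ π : Equiv.Perm (Fin 4), C π * ∏ i, l2Norm (G (π i)) :=
        Finset.sum_le_sum fun π _ => hC π (G ∘ π)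
    _ = (∑ π, C π) * ∏ i, l2Norm (G i) := by
        rw [ENNReal.ofNNReal_finsetSum, Finset.sum_mul]
        exact Finset.sum_congr rfl fun π _ => by rw [Equiv.prod_comp π fun i => l2Norm (G i)]

lemma tsum_enorm_tripleProd_mul_le (f₁ f₂ f₃ : (Fin d → ℤ) → ℂ) (H : (Fin d → ℤ) → ℝ≥0∞) :
    ∑' ξ, ‖tripleProd d f₁ f₂ f₃ ξ‖ₑ * H ξ
      ≤ ∑' x, (sumZero d).indicator
          (fun x => ‖f₁ (x 0)‖ₑ * ‖f₂ (x 1)‖ₑ * ‖f₃ (x 2)‖ₑ * H (-x 3)) x := by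
  rw [tsum_sumZero_eq]
  calc ∑' ξ, ‖tripleProd d f₁ f₂ f₃ ξ‖ₑ * H ξ
      ≤ ∑' ξ, ∑' q : (Fin d → ℤ) × (Fin d → ℤ),
          ‖f₁ q.1‖ₑ * ‖f₂ q.2‖ₑ * ‖f₃ (ξ - q.1 - q.2)‖ₑ * H ξ := by
        gcongr with ξ
        rw [ENNReal.tsum_mul_right]
        gcongr
        refine enorm_tsum_le_tsum_enorm.trans_eq (tsum_congr fun q => ?_)
        simp only [enorm_mul]
    _ = ∑' q : (Fin d → ℤ) × (Fin d → ℤ), ∑' u,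
          ‖f₁ q.1‖ₑ * ‖f₂ q.2‖ₑ * ‖f₃ u‖ₑ * H (q.1 + q.2 + u) := by
        rw [ENNReal.tsum_comm]
        refine tsum_congr fun q => ?_
        rw [← (Equiv.addLeft (q.1 + q.2)).tsum_eq]
        refine tsum_congr fun u => ?_
        simp only [Equiv.coe_addLeft]
        rw [show q.1 + q.2 + u - q.1 - q.2 = u by abel]
    _ = _ := by
        rw [ENNReal.tsum_comm]
        simp [Matrix.cons_val]

lemma tsum_weight_mul_tripleProd_le (σ s : ℝ) (f₁ f₂ f₃ : (Fin d → ℤ) → ℂ)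
    (H : (Fin d → ℤ) → ℝ≥0∞) :
    ∑' ξ, weight (s / 2) ξ * ‖tripleProd d f₁ f₂ f₃ ξ‖ₑ * H ξ
      ≤ ∑' x, (sumZero d).indicator (quadTerm ![-(σ / 2), -(σ / 2), -(σ / 2), s / 2]
          ![fun ξ => weight (σ / 2) ξ * ‖f₁ ξ‖ₑ, fun ξ => weight (σ / 2) ξ * ‖f₂ ξ‖ₑ,
            fun ξ => weight (σ / 2) ξ * ‖f₃ ξ‖ₑ, H ∘ Neg.neg]) x := by
  have hcancel : ∀ (ξ : Fin d → ℤ) (a : ℝ≥0∞), weight (-(σ / 2)) ξ * (weight (σ / 2) ξ * a) = a :=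
    fun ξ a => by rw [← mul_assoc, weight_neg_mul_weight, one_mul]
  calc ∑' ξ, weight (s / 2) ξ * ‖tripleProd d f₁ f₂ f₃ ξ‖ₑ * H ξ
      = ∑' ξ, ‖tripleProd d f₁ f₂ f₃ ξ‖ₑ * (weight (s / 2) ξ * H ξ) :=
        tsum_congr fun ξ => by ring
    _ ≤ _ := tsum_enorm_tripleProd_mul_le f₁ f₂ f₃ _
    _ = _ := by
        congr 1
        ext x
        congr 1
        ext y
        simp only [quadTerm, Fin.prod_univ_four, Matrix.cons_val, hcancel, weight_neg,
          Function.comp_apply]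

end SobolevTrilinear

open SobolevTrilinear

theorem stmt_2_general (d : ℕ) (s : ℝ)
    (hs₁ : -((d : ℝ)/2) < s) (hs₂ : s < (d : ℝ)/2) :
    ∃ C : ℝ, 0 < C ∧ ∀ f₁ f₂ f₃ : (Fin d → ℤ) → ℂ,
      sobNorm d ((s + d)/3) f₁ ≠ ⊤ → sobNorm d ((s + d)/3) f₂ ≠ ⊤ →
      sobNorm d ((s + d)/3) f₃ ≠ ⊤ →
      sobNorm d s (tripleProd d f₁ f₂ f₃) ≤
        ENNReal.ofReal C * sobNorm d ((s + d)/3) f₁ * sobNorm d ((s + d)/3) f₂ *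
          sobNorm d ((s + d)/3) f₃ := by
  set σ : ℝ := (s + d) / 3
  set t : Fin 4 → ℝ := ![-(σ / 2), -(σ / 2), -(σ / 2), s / 2]
  have ht : ∀ i, -((d : ℝ) / 4) < t i := by
    intro i
    fin_cases i <;> simp [t, σ] <;> linarith
  have hsum : ∑ i, t i = -((d : ℝ) / 2) := by
    simp only [t, σ, Fin.sum_univ_four, Matrix.cons_val]
    ring
  obtain ⟨C, hC⟩ := exists_tsum_quadTerm_le ht hsum
  refine ⟨C + 1, by positivity, fun f₁ f₂ f₃ _ _ _ => ?_⟩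
  simp only [sobNorm_eq_l2Norm]
  calc l2Norm (fun ξ => weight (s / 2) ξ * ‖tripleProd d f₁ f₂ f₃ ξ‖ₑ)
      ≤ C * (l2Norm (fun ξ => weight (σ / 2) ξ * ‖f₁ ξ‖ₑ)
          * l2Norm (fun ξ => weight (σ / 2) ξ * ‖f₂ ξ‖ₑ)
          * l2Norm (fun ξ => weight (σ / 2) ξ * ‖f₃ ξ‖ₑ)) := by
        refine l2Norm_le_of_tsum_mul_le
          (fun ξ => ENNReal.mul_ne_top (weight_ne_top _ _) enorm_ne_top) fun H => ?_
        refine (tsum_weight_mul_tripleProd_le σ s f₁ f₂ f₃ H).trans ((hC _).trans_eq ?_)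
        simp only [Fin.prod_univ_four, Matrix.cons_val]
        rw [show l2Norm (H ∘ Neg.neg) = l2Norm H from l2Norm_comp_equiv (Equiv.neg _) H]
        ring
    _ ≤ _ := by
        rw [mul_assoc, mul_assoc, mul_assoc]
        gcongr
        rw [← ENNReal.ofReal_coe_nnreal]
        exact ENNReal.ofReal_le_ofReal (by linarith)

/-- For `s ∈ (-d/2, d/2)` and `f₁, f₂, f₃ ∈ H^{(s+d)/3}(𝕋ᵈ)`,
`‖f₁ f₂ f₃‖_{Hˢ} ≲ ∏ ‖f_j‖_{H^{(s+d)/3}}`, the constant depending only on `s, d`. -/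
theorem stmt_2 (d : ℕ) (hd : 0 < d) (s : ℝ)
    (hs₁ : -((d : ℝ)/2) < s) (hs₂ : s < (d : ℝ)/2) :
    ∃ C : ℝ, 0 < C ∧ ∀ f₁ f₂ f₃ : (Fin d → ℤ) → ℂ,
      sobNorm d ((s + d)/3) f₁ ≠ ⊤ → sobNorm d ((s + d)/3) f₂ ≠ ⊤ →
      sobNorm d ((s + d)/3) f₃ ≠ ⊤ →
      sobNorm d s (tripleProd d f₁ f₂ f₃) ≤
        ENNReal.ofReal C * sobNorm d ((s + d)/3) f₁ * sobNorm d ((s + d)/3) f₂ *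
          sobNorm d ((s + d)/3) f₃ :=
  stmt_2_general d s hs₁ hs₂
end

section
/- Let $s \ge 0$, $s_1, s_2, \tilde s_1, \tilde s_2 > 0$ with $s_1 + s_2 = d/2$ and $\tilde s_1 + \tilde s_2 = d/2$. Then for $f, g$ in the appropriate Sobolev spaces on $\mathbb{T}^d$, $\| f g \|_{H^{s}(\mathbb{T}^d)} \lesssim \| f \|_{H^{s+s_1}} \| g \|_{H^{s_2}} + \| f \|_{H^{\tilde s_1}} \| g \|_{H^{s + \tilde s_2}}$. -/
/-!
Bound the Fourier coefficients of `f g` by the convolution of `|f̂|` and `|ĝ|`, and cut both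
sequences into dyadic shells `2 ^ (k - 1) ≤ |ξ|_∞ < 2 ^ k`. For a pair of shells `j ≤ k`,
Young's inequality `ℓ² ⋆ ℓ¹ → ℓ²`, Cauchy–Schwarz on the low shell (about `2 ^ (j d)` points) and
the size of the weights on each shell bound the `Hˢ` norm of the piece by
`2 ^ (-σ₁ (k - j)) ‖f_k‖_{H^{s+σ₁}} ‖g_j‖_{H^{σ₂}}`; the criticality `σ₁ + σ₂ = d/2` is exactly
what makes the powers of `2 ^ j` cancel. Summing the geometric factor with Cauchy–Schwarz in the
shell index gives the first term of the estimate; the pairs `k ≤ j` give the second, with the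
roles of `f` and `g` exchanged.
-/

open scoped ENNReal

/-- Fourier coefficients of the product `f g` on `𝕋ᵈ`: the convolution. -/
noncomputable def pairProd (d : ℕ) (f g : (Fin d → ℤ) → ℂ) : (Fin d → ℤ) → ℂ :=
  fun ξ => ∑' η : Fin d → ℤ, f η * g (ξ - η)

open MeasureTheory

namespace SobolevProduct

lemma rpow_half_sq (x : ℝ≥0∞) : (x ^ (1/2 : ℝ)) ^ 2 = x := by
  rw [← ENNReal.rpow_natCast, ← ENNReal.rpow_mul]
  norm_num

lemma sq_rpow_half (x : ℝ≥0∞) : (x ^ 2) ^ (1/2 : ℝ) = x := by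
  rw [← ENNReal.rpow_natCast, ← ENNReal.rpow_mul]
  norm_num

lemma rpow_half_mul_self (x : ℝ≥0∞) : x ^ (1/2 : ℝ) * x ^ (1/2 : ℝ) = x := by
  rw [← sq, rpow_half_sq]

section WeightedL2

variable {α : Type*}

noncomputable def wl2Norm (w a : α → ℝ≥0∞) : ℝ≥0∞ := (∑' x, w x * a x ^ 2) ^ (1/2 : ℝ)

lemma wl2Norm_sq (w a : α → ℝ≥0∞) : wl2Norm w a ^ 2 = ∑' x, w x * a x ^ 2 :=
  rpow_half_sq _

lemma wl2Norm_le_iff {w a : α → ℝ≥0∞} {c : ℝ≥0∞} :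
    wl2Norm w a ≤ c ↔ ∑' x, w x * a x ^ 2 ≤ c ^ 2 := by
  rw [wl2Norm, one_div, ENNReal.rpow_inv_le_iff two_pos, ENNReal.rpow_two]

lemma wl2Norm_zero (w : α → ℝ≥0∞) : wl2Norm w 0 = 0 := by
  simp [wl2Norm]

lemma wl2Norm_mono (w : α → ℝ≥0∞) {a b : α → ℝ≥0∞} (h : ∀ x, a x ≤ b x) :
    wl2Norm w a ≤ wl2Norm w b := by
  unfold wl2Norm
  gcongr with x
  exact h x

lemma wl2Norm_le_mul_of_le {w v a : α → ℝ≥0∞} {c : ℝ≥0∞} (h : ∀ x, a x ≠ 0 → w x ≤ c * v x) :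
    wl2Norm w a ≤ c ^ (1/2 : ℝ) * wl2Norm v a := by
  rw [wl2Norm, wl2Norm, ← ENNReal.mul_rpow_of_nonneg _ _ (by norm_num), ← ENNReal.tsum_mul_left]
  refine ENNReal.rpow_le_rpow (ENNReal.tsum_le_tsum fun x => ?_) (by norm_num)
  by_cases hx : a x = 0
  · simp [hx]
  · rw [← mul_assoc]
    exact mul_le_mul_left (h x hx) _

variable [MeasurableSpace α] [MeasurableSingletonClass α]

lemma tsum_mul_sq_eq_lintegral (w a : α → ℝ≥0∞) :
    ∑' x, w x * a x ^ 2 = ∫⁻ x, (w x ^ (1/2 : ℝ) * a x) ^ (2 : ℝ) ∂Measure.count := by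
  rw [lintegral_count]
  refine tsum_congr fun x => ?_
  rw [ENNReal.rpow_two, mul_pow, rpow_half_sq]

variable [Countable α]

lemma tsum_mul_mul_le_wl2Norm_mul (w a b : α → ℝ≥0∞) :
    ∑' x, w x * a x * b x ≤ wl2Norm w a * wl2Norm w b := by
  have hpq : Real.HolderConjugate 2 2 := .two_two
  have h := ENNReal.lintegral_mul_le_Lp_mul_Lq Measure.count hpq
    (f := fun x => w x ^ (1/2 : ℝ) * a x) (g := fun x => w x ^ (1/2 : ℝ) * b x)
    (measurable_of_countable _).aemeasurable (measurable_of_countable _).aemeasurable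
  rw [wl2Norm, wl2Norm, tsum_mul_sq_eq_lintegral, tsum_mul_sq_eq_lintegral]
  convert h using 1
  rw [lintegral_count]
  refine tsum_congr fun x => ?_
  simp only [Pi.mul_apply]
  conv_lhs => rw [← rpow_half_mul_self (w x)]
  ring

lemma wl2Norm_add_le (w a b : α → ℝ≥0∞) : wl2Norm w (a + b) ≤ wl2Norm w a + wl2Norm w b := by
  have h := ENNReal.lintegral_Lp_add_le (μ := Measure.count) (p := 2)
    (f := fun x => w x ^ (1/2 : ℝ) * a x) (g := fun x => w x ^ (1/2 : ℝ) * b x)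
    (measurable_of_countable _).aemeasurable (measurable_of_countable _).aemeasurable one_le_two
  rw [wl2Norm, wl2Norm, wl2Norm, tsum_mul_sq_eq_lintegral, tsum_mul_sq_eq_lintegral,
    tsum_mul_sq_eq_lintegral]
  convert h using 4 with x
  simp [mul_add]

lemma wl2Norm_tsum_le {ι : Type*} [Countable ι] (w : α → ℝ≥0∞) (F : ι → α → ℝ≥0∞) :
    wl2Norm w (fun x => ∑' i, F i x) ≤ ∑' i, wl2Norm w (F i) := by
  have hfin (s : Finset ι) : wl2Norm w (∑ i ∈ s, F i) ≤ ∑ i ∈ s, wl2Norm w (F i) :=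
    Finset.le_sum_of_subadditive _ (wl2Norm_zero w).le (wl2Norm_add_le w) s F
  have hmono : Monotone fun (s : Finset ι) x => w x * (∑ i ∈ s, F i x) ^ 2 :=
    fun s t hst x => by
      simp only
      gcongr
  rw [wl2Norm_le_iff]
  calc ∑' x, w x * (∑' i, F i x) ^ 2
      = ⨆ s : Finset ι, ∑' x, w x * (∑ i ∈ s, F i x) ^ 2 := by
        simp_rw [ENNReal.tsum_eq_iSup_sum (α := ι), ENNReal.iSup_pow, ENNReal.mul_iSup,
          ← lintegral_count]
        exact lintegral_iSup_directed (fun _ => (measurable_of_countable _).aemeasurable)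
          hmono.directed_le
    _ ≤ (∑' i, wl2Norm w (F i)) ^ 2 := by
        refine iSup_le fun s => ?_
        rw [← wl2Norm_sq]
        refine pow_le_pow_left' ?_ 2
        calc wl2Norm w (fun x => ∑ i ∈ s, F i x) = wl2Norm w (∑ i ∈ s, F i) := by
              rw [Finset.sum_fn]
          _ ≤ ∑ i ∈ s, wl2Norm w (F i) := hfin s
          _ ≤ ∑' i, wl2Norm w (F i) := ENNReal.sum_le_tsum s

end WeightedL2

section Convolution

variable {G : Type*} [AddCommGroup G]

noncomputable def conv (A B : G → ℝ≥0∞) (ξ : G) : ℝ≥0∞ := ∑' η, A η * B (ξ - η)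

lemma conv_comm (A B : G → ℝ≥0∞) : conv A B = conv B A := by
  funext ξ
  rw [conv, conv, ← (Equiv.subLeft ξ).tsum_eq]
  simp only [Equiv.subLeft_apply, sub_sub_cancel, mul_comm]

lemma exists_ne_zero_of_conv_ne_zero {A B : G → ℝ≥0∞} {ξ : G} (h : conv A B ξ ≠ 0) :
    ∃ η, A η ≠ 0 ∧ B (ξ - η) ≠ 0 := by
  by_contra! h'
  exact h (ENNReal.tsum_eq_zero.2 fun η => by by_cases hA : A η = 0 <;> simp [hA, h' η])

variable [MeasurableSpace G] [MeasurableSingletonClass G] [Countable G]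

lemma wl2Norm_one_conv_le (A B : G → ℝ≥0∞) :
    wl2Norm 1 (conv A B) ≤ (∑' ζ, B ζ) * wl2Norm 1 A := by
  have hpoint (ξ : G) : conv A B ξ ^ 2 ≤ (∑' η, B (ξ - η) * A η ^ 2) * ∑' ζ, B ζ := by
    have h := tsum_mul_mul_le_wl2Norm_mul (fun η => B (ξ - η)) A 1
    simp only [Pi.one_apply, mul_one] at h
    calc conv A B ξ ^ 2 = (∑' η, B (ξ - η) * A η) ^ 2 := by simp only [conv, mul_comm]
      _ ≤ (wl2Norm (fun η => B (ξ - η)) A * wl2Norm (fun η => B (ξ - η)) 1) ^ 2 :=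
          pow_le_pow_left' h 2
      _ = (∑' η, B (ξ - η) * A η ^ 2) * ∑' ζ, B ζ := by
          rw [mul_pow, wl2Norm_sq, wl2Norm_sq]
          simp only [Pi.one_apply, one_pow, mul_one]
          congr 1
          exact (Equiv.subLeft ξ).tsum_eq B
  rw [wl2Norm_le_iff, mul_pow, wl2Norm_sq]
  calc ∑' ξ, (1 : G → ℝ≥0∞) ξ * conv A B ξ ^ 2
      ≤ ∑' ξ, (∑' η, B (ξ - η) * A η ^ 2) * ∑' ζ, B ζ := by
        simpa only [Pi.one_apply, one_mul] using ENNReal.tsum_le_tsum hpoint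
    _ = (∑' ζ, B ζ) ^ 2 * ∑' η, 1 * A η ^ 2 := by
        have hB (η : G) : ∑' ξ, B (ξ - η) = ∑' ζ, B ζ := (Equiv.subRight η).tsum_eq B
        rw [ENNReal.tsum_mul_right, ENNReal.tsum_comm]
        simp_rw [ENNReal.tsum_mul_right, hB, ENNReal.tsum_mul_left, one_mul]
        ring

end Convolution

lemma tsum_ite_le_eq_tsum_add (g : ℕ → ℝ≥0∞) (j : ℕ) :
    ∑' k, (if j ≤ k then g k else 0) = ∑' n, g (n + j) := by
  rw [← ENNReal.summable.sum_add_tsum_nat_add' (k := j),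
    Finset.sum_eq_zero fun i hi => if_neg (by simpa using hi), zero_add]
  simp

lemma tsum_tsum_le_tsum_tsum_add (F : ℕ → ℕ → ℝ≥0∞) :
    ∑' k, ∑' j, F k j ≤ ∑' j, ∑' n, F (n + j) j + ∑' k, ∑' n, F k (n + k) := by
  calc ∑' k, ∑' j, F k j
      ≤ ∑' k, ∑' j, ((if j ≤ k then F k j else 0) + if k ≤ j then F k j else 0) := by
        gcongr with k j
        rcases le_total j k with h | h <;> simp [h]
    _ = ∑' j, ∑' n, F (n + j) j + ∑' k, ∑' n, F k (n + k) := by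
        simp_rw [ENNReal.tsum_add]
        rw [ENNReal.tsum_comm (f := fun k j => if j ≤ k then F k j else 0)]
        simp_rw [tsum_ite_le_eq_tsum_add]

lemma tsum_tsum_geom_mul_le (ρ : ℝ≥0∞) (A B : ℕ → ℝ≥0∞) :
    ∑' j, ∑' n, ρ ^ n * A (n + j) * B j ≤ (1 - ρ)⁻¹ * (wl2Norm 1 A * wl2Norm 1 B) := by
  have hshift (n : ℕ) : wl2Norm 1 (fun j => A (n + j)) ≤ wl2Norm 1 A := by
    rw [wl2Norm_le_iff, wl2Norm_sq]
    exact ENNReal.tsum_comp_le_tsum_of_injective (add_right_injective n) _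
  calc ∑' j, ∑' n, ρ ^ n * A (n + j) * B j
      = ∑' n, ρ ^ n * ∑' j, 1 * A (n + j) * B j := by
        rw [ENNReal.tsum_comm]
        simp_rw [← ENNReal.tsum_mul_left, one_mul, mul_assoc]
    _ ≤ ∑' n, ρ ^ n * (wl2Norm 1 A * wl2Norm 1 B) := by
        gcongr with n
        exact (tsum_mul_mul_le_wl2Norm_mul 1 _ B).trans (by gcongr; exact hshift n)
    _ = (1 - ρ)⁻¹ * (wl2Norm 1 A * wl2Norm 1 B) := by
        rw [ENNReal.tsum_mul_right, ENNReal.tsum_geometric]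

variable {d : ℕ}

def supNorm (ξ : Fin d → ℤ) : ℕ := Finset.univ.sup fun i => (ξ i).natAbs

-- `dyadicScale ξ = k` iff `2 ^ (k - 1) ≤ |ξ|_∞ < 2 ^ k`, with `dyadicScale 0 = 0`.
def dyadicScale (ξ : Fin d → ℤ) : ℕ := (supNorm ξ).size

def bracket (ξ : Fin d → ℤ) : ℕ := 1 + ∑ i, (ξ i).natAbs ^ 2

lemma natAbs_le_supNorm (ξ : Fin d → ℤ) (i : Fin d) : (ξ i).natAbs ≤ supNorm ξ :=
  Finset.le_sup (f := fun i => (ξ i).natAbs) (Finset.mem_univ i)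

lemma supNorm_add_le (ξ η : Fin d → ℤ) : supNorm (ξ + η) ≤ supNorm ξ + supNorm η :=
  Finset.sup_le fun i _ => (Int.natAbs_add_le _ _).trans
    (add_le_add (natAbs_le_supNorm ξ i) (natAbs_le_supNorm η i))

lemma supNorm_lt_two_pow_dyadicScale (ξ : Fin d → ℤ) : supNorm ξ < 2 ^ dyadicScale ξ :=
  Nat.lt_size_self _

lemma two_pow_le_supNorm {ξ : Fin d → ℤ} {k : ℕ} (h : dyadicScale ξ = k + 1) :
    2 ^ k ≤ supNorm ξ := by
  by_contra hlt
  have := Nat.size_le.2 (not_le.1 hlt)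
  rw [dyadicScale] at h
  omega

lemma sq_supNorm_le (ξ : Fin d → ℤ) : supNorm ξ ^ 2 ≤ ∑ i, (ξ i).natAbs ^ 2 :=
  Nat.le_sqrt'.1 <| Finset.sup_le fun i _ => Nat.le_sqrt'.2 <|
    Finset.single_le_sum (f := fun i => (ξ i).natAbs ^ 2) (fun _ _ => Nat.zero_le _)
      (Finset.mem_univ i)

lemma bracket_le_of_supNorm_lt {ξ : Fin d → ℤ} {m : ℕ} (h : supNorm ξ < 2 ^ m) :
    bracket ξ ≤ (d + 1) * 2 ^ (2 * m) := by
  have hi (i : Fin d) : (ξ i).natAbs ^ 2 ≤ 2 ^ (2 * m) := by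
    rw [mul_comm, pow_mul]
    exact Nat.pow_le_pow_left ((natAbs_le_supNorm ξ i).trans h.le) 2
  have hsum : ∑ i, (ξ i).natAbs ^ 2 ≤ d * 2 ^ (2 * m) := by
    simpa using Finset.sum_le_sum fun i (_ : i ∈ Finset.univ) => hi i
  have : 1 ≤ 2 ^ (2 * m) := Nat.one_le_two_pow
  rw [bracket, add_mul, one_mul]
  omega

lemma two_pow_le_four_mul_bracket (ξ : Fin d → ℤ) : 2 ^ (2 * dyadicScale ξ) ≤ 4 * bracket ξ := by
  rcases h : dyadicScale ξ with _ | k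
  · simp [bracket]
    omega
  · calc 2 ^ (2 * (k + 1)) = 4 * (2 ^ k) ^ 2 := by ring
      _ ≤ 4 * supNorm ξ ^ 2 := by gcongr; exact two_pow_le_supNorm h
      _ ≤ 4 * bracket ξ := by have := sq_supNorm_le ξ; rw [bracket]; omega

lemma encard_dyadicScale_preimage_le (j : ℕ) :
    (dyadicScale ⁻¹' {j} : Set (Fin d → ℤ)).encard ≤ 2 ^ ((j + 1) * d) := by
  classical
  set F := Fintype.piFinset fun _ : Fin d => Finset.Ioo (-(2 ^ j : ℤ)) (2 ^ j)
  have hsub : dyadicScale ⁻¹' {j} ⊆ (F : Set (Fin d → ℤ)) := by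
    intro ξ hξ
    have h : supNorm ξ < 2 ^ j := hξ ▸ supNorm_lt_two_pow_dyadicScale ξ
    refine Fintype.mem_piFinset.2 fun i => Finset.mem_Ioo.2 ?_
    have hi : ((ξ i).natAbs : ℤ) < 2 ^ j := by exact_mod_cast (natAbs_le_supNorm ξ i).trans_lt h
    rw [Int.natCast_natAbs] at hi
    exact abs_lt.1 hi
  have hcard : F.card ≤ 2 ^ ((j + 1) * d) := by
    rw [Fintype.card_piFinset, Finset.prod_const, Finset.card_univ, Fintype.card_fin, pow_mul]
    refine Nat.pow_le_pow_left ?_ d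
    rw [Int.card_Ioo, Int.toNat_le]
    push_cast [pow_succ]
    linarith
  calc (dyadicScale ⁻¹' {j} : Set (Fin d → ℤ)).encard ≤ (F : Set (Fin d → ℤ)).encard :=
        Set.encard_le_encard hsub
    _ ≤ 2 ^ ((j + 1) * d) := by
        rw [Set.encard_coe_eq_coe_finsetCard]
        exact_mod_cast hcard

noncomputable def weight (s : ℝ) (ξ : Fin d → ℤ) : ℝ≥0∞ := (bracket ξ : ℝ≥0∞) ^ s

lemma bracket_pos (ξ : Fin d → ℤ) : 0 < bracket ξ := by
  unfold bracket
  omega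

lemma bracket_ne_zero (ξ : Fin d → ℤ) : (bracket ξ : ℝ≥0∞) ≠ 0 := by
  exact_mod_cast (bracket_pos ξ).ne'

lemma weight_ne_zero (s : ℝ) (ξ : Fin d → ℤ) : weight s ξ ≠ 0 :=
  (ENNReal.rpow_pos (pos_iff_ne_zero.2 (bracket_ne_zero ξ)) (ENNReal.natCast_ne_top _)).ne'

lemma weight_ne_top (s : ℝ) (ξ : Fin d → ℤ) : weight s ξ ≠ ⊤ :=
  ENNReal.rpow_ne_top_of_ne_zero (bracket_ne_zero ξ) (ENNReal.natCast_ne_top _)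

lemma sobNorm_eq_wl2Norm (s : ℝ) (f : (Fin d → ℤ) → ℂ) :
    sobNorm d s f = wl2Norm (weight s) (fun ξ => ‖f ξ‖ₑ) := by
  unfold sobNorm wl2Norm
  congr 1
  refine tsum_congr fun ξ => ?_
  have hB : 1 + ∑ i, ((ξ i : ℝ)) ^ 2 = (bracket ξ : ℝ) := by
    simp [bracket, Nat.cast_natAbs, sq_abs]
  have hpos : (0 : ℝ) < bracket ξ := by exact_mod_cast bracket_pos ξ
  rw [sobWeight, hB, ENNReal.ofReal_mul (Real.rpow_nonneg hpos.le _),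
    ← ENNReal.ofReal_rpow_of_pos hpos, ENNReal.ofReal_natCast, ENNReal.ofReal_pow (norm_nonneg _),
    ofReal_norm, weight]

lemma weight_le_of_supNorm_lt {s : ℝ} (hs : 0 ≤ s) {ξ : Fin d → ℤ} {m : ℕ}
    (h : supNorm ξ < 2 ^ m) : weight s ξ ≤ ((d : ℝ≥0∞) + 1) ^ s * 2 ^ (2 * (m : ℝ) * s) := by
  have hB : (bracket ξ : ℝ≥0∞) ≤ ((d : ℝ≥0∞) + 1) * 2 ^ (2 * (m : ℝ)) := by
    rw [show 2 * (m : ℝ) = ((2 * m : ℕ) : ℝ) by push_cast; ring, ENNReal.rpow_natCast]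
    exact_mod_cast bracket_le_of_supNorm_lt h
  calc weight s ξ ≤ (((d : ℝ≥0∞) + 1) * 2 ^ (2 * (m : ℝ))) ^ s := ENNReal.rpow_le_rpow hB hs
    _ = ((d : ℝ≥0∞) + 1) ^ s * 2 ^ (2 * (m : ℝ) * s) := by
        rw [ENNReal.mul_rpow_of_nonneg _ _ hs, ← ENNReal.rpow_mul]

lemma two_rpow_le_weight {τ : ℝ} (hτ : 0 ≤ τ) (ξ : Fin d → ℤ) :
    (2 : ℝ≥0∞) ^ ((2 * (dyadicScale ξ : ℝ) - 2) * τ) ≤ weight τ ξ := by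
  rw [ENNReal.rpow_mul, weight]
  refine ENNReal.rpow_le_rpow ?_ hτ
  rw [ENNReal.rpow_sub _ _ two_ne_zero ENNReal.ofNat_ne_top,
    show 2 * (dyadicScale ξ : ℝ) = ((2 * dyadicScale ξ : ℕ) : ℝ) by push_cast; ring,
    ENNReal.rpow_natCast, ENNReal.rpow_two]
  refine ENNReal.div_le_of_le_mul ?_
  calc (2 : ℝ≥0∞) ^ (2 * dyadicScale ξ) ≤ 4 * bracket ξ := by
        exact_mod_cast two_pow_le_four_mul_bracket ξ
    _ = bracket ξ * 2 ^ 2 := by ring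

lemma one_le_two_rpow_neg_mul {x : ℝ} {c : ℝ≥0∞} (h : (2 : ℝ≥0∞) ^ x ≤ c) :
    1 ≤ (2 : ℝ≥0∞) ^ (-x) * c := by
  calc (1 : ℝ≥0∞) = 2 ^ (-x) * 2 ^ x := by
        rw [← ENNReal.rpow_add _ _ two_ne_zero ENNReal.ofNat_ne_top, neg_add_cancel,
          ENNReal.rpow_zero]
    _ ≤ 2 ^ (-x) * c := by gcongr

noncomputable def dyadicPiece (a : (Fin d → ℤ) → ℝ≥0∞) (k : ℕ) : (Fin d → ℤ) → ℝ≥0∞ :=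
  (dyadicScale ⁻¹' {k}).indicator a

lemma dyadicScale_eq_of_dyadicPiece_ne_zero {a : (Fin d → ℤ) → ℝ≥0∞} {k : ℕ} {ξ : Fin d → ℤ}
    (h : dyadicPiece a k ξ ≠ 0) : dyadicScale ξ = k :=
  (Set.mem_of_indicator_ne_zero h : ξ ∈ dyadicScale ⁻¹' {k})

lemma tsum_dyadicPiece (a : (Fin d → ℤ) → ℝ≥0∞) (ξ : Fin d → ℤ) :
    ∑' k, dyadicPiece a k ξ = a ξ := by
  rw [tsum_eq_single (dyadicScale ξ) fun k hk => ?_]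
  · exact Set.indicator_of_mem (s := dyadicScale ⁻¹' {dyadicScale ξ}) rfl _
  · exact Set.indicator_of_notMem (s := dyadicScale ⁻¹' {k}) (Ne.symm hk) _

lemma wl2Norm_one_wl2Norm_dyadicPiece (w a : (Fin d → ℤ) → ℝ≥0∞) :
    wl2Norm 1 (fun k => wl2Norm w (dyadicPiece a k)) = wl2Norm w a := by
  have hsq (k : ℕ) (ξ : Fin d → ℤ) :
      dyadicPiece a k ξ ^ 2 = dyadicPiece (fun η => a η ^ 2) k ξ := by
    by_cases h : ξ ∈ dyadicScale ⁻¹' {k} <;> simp [dyadicPiece, h]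
  rw [wl2Norm, wl2Norm]
  congr 1
  simp_rw [Pi.one_apply, one_mul, wl2Norm_sq, hsq]
  rw [ENNReal.tsum_comm]
  refine tsum_congr fun ξ => ?_
  simp_rw [dyadicPiece, ← Set.indicator_mul_right]
  exact tsum_dyadicPiece (fun η => w η * a η ^ 2) ξ

lemma conv_eq_tsum_tsum_dyadicPiece (a b : (Fin d → ℤ) → ℝ≥0∞) (ξ : Fin d → ℤ) :
    conv a b ξ = ∑' k, ∑' j, conv (dyadicPiece a k) (dyadicPiece b j) ξ := by
  calc conv a b ξ = ∑' η, (∑' k, dyadicPiece a k η) * ∑' j, dyadicPiece b j (ξ - η) := by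
        simp only [conv, tsum_dyadicPiece]
    _ = ∑' k, ∑' j, conv (dyadicPiece a k) (dyadicPiece b j) ξ := by
        simp_rw [conv, ← ENNReal.tsum_mul_right, ← ENNReal.tsum_mul_left]
        rw [ENNReal.tsum_comm]
        exact tsum_congr fun k => ENNReal.tsum_comm

lemma wl2Norm_one_dyadicPiece_le {τ : ℝ} (hτ : 0 ≤ τ) (a : (Fin d → ℤ) → ℝ≥0∞) (k : ℕ) :
    wl2Norm 1 (dyadicPiece a k)
      ≤ ((2 : ℝ≥0∞) ^ (-((2 * (k : ℝ) - 2) * τ))) ^ (1/2 : ℝ)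
        * wl2Norm (weight τ) (dyadicPiece a k) := by
  refine wl2Norm_le_mul_of_le fun ξ hξ => ?_
  have h := two_rpow_le_weight hτ ξ
  rw [dyadicScale_eq_of_dyadicPiece_ne_zero hξ] at h
  exact one_le_two_rpow_neg_mul h

lemma tsum_indicator_inv_weight_le {σ : ℝ} (hσ : 0 ≤ σ) (j : ℕ) :
    ∑' ζ : Fin d → ℤ, (dyadicScale ⁻¹' {j}).indicator (fun ζ => (weight σ ζ)⁻¹) ζ
      ≤ 2 ^ (((j : ℝ) + 1) * d) * 2 ^ (-((2 * (j : ℝ) - 2) * σ)) := by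
  set S : Set (Fin d → ℤ) := dyadicScale ⁻¹' {j}
  have hpoint (ζ : Fin d → ℤ) : S.indicator (fun ζ => (weight σ ζ)⁻¹) ζ
      ≤ S.indicator (fun _ => (2 : ℝ≥0∞) ^ (-((2 * (j : ℝ) - 2) * σ))) ζ := by
    refine Set.indicator_le_indicator' fun hζ => ?_
    have h := two_rpow_le_weight hσ ζ
    rw [show dyadicScale ζ = j from hζ] at h
    rw [ENNReal.rpow_neg]
    exact ENNReal.inv_le_inv.2 h
  have hcard : (S.encard : ℝ≥0∞) ≤ 2 ^ (((j : ℝ) + 1) * d) := by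
    rw [show ((j : ℝ) + 1) * d = (((j + 1) * d : ℕ) : ℝ) by push_cast; ring,
      ENNReal.rpow_natCast]
    exact_mod_cast encard_dyadicScale_preimage_le j
  calc ∑' ζ, S.indicator (fun ζ => (weight σ ζ)⁻¹) ζ
      ≤ ∑' ζ, S.indicator (fun _ => (2 : ℝ≥0∞) ^ (-((2 * (j : ℝ) - 2) * σ))) ζ :=
        ENNReal.tsum_le_tsum hpoint
    _ = S.encard * 2 ^ (-((2 * (j : ℝ) - 2) * σ)) := by
        rw [← tsum_subtype, ENNReal.tsum_set_const]
    _ ≤ _ := by gcongr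

lemma tsum_dyadicPiece_le {σ : ℝ} (hσ : 0 ≤ σ) (b : (Fin d → ℤ) → ℝ≥0∞) (j : ℕ) :
    ∑' ζ, dyadicPiece b j ζ
      ≤ ((2 : ℝ≥0∞) ^ (((j : ℝ) + 1) * d) * 2 ^ (-((2 * (j : ℝ) - 2) * σ))) ^ (1/2 : ℝ)
        * wl2Norm (weight σ) (dyadicPiece b j) := by
  set S : Set (Fin d → ℤ) := dyadicScale ⁻¹' {j}
  set u := S.indicator fun ζ => (weight σ ζ)⁻¹
  have hwu (ζ : Fin d → ℤ) (hζ : ζ ∈ S) : weight σ ζ * u ζ = 1 := by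
    rw [show u ζ = (weight σ ζ)⁻¹ from Set.indicator_of_mem hζ _,
      ENNReal.mul_inv_cancel (weight_ne_zero σ ζ) (weight_ne_top σ ζ)]
  have hu : ∑' ζ, weight σ ζ * u ζ ^ 2 = ∑' ζ, u ζ := by
    refine tsum_congr fun ζ => ?_
    by_cases hζ : ζ ∈ S
    · rw [sq, ← mul_assoc, hwu ζ hζ, one_mul]
    · simp [u, Set.indicator_of_notMem hζ]
  calc ∑' ζ, dyadicPiece b j ζ = ∑' ζ, weight σ ζ * u ζ * dyadicPiece b j ζ := by
        refine tsum_congr fun ζ => ?_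
        by_cases hζ : ζ ∈ S
        · rw [hwu ζ hζ, one_mul]
        · simp [dyadicPiece, Set.indicator_of_notMem hζ, S]
    _ ≤ wl2Norm (weight σ) u * wl2Norm (weight σ) (dyadicPiece b j) :=
        tsum_mul_mul_le_wl2Norm_mul _ _ _
    _ ≤ _ := by
        rw [wl2Norm, hu]
        gcongr
        exact tsum_indicator_inv_weight_le hσ j

lemma supNorm_lt_of_conv_dyadicPiece_ne_zero {a b : (Fin d → ℤ) → ℝ≥0∞} {n j : ℕ}
    {ξ : Fin d → ℤ} (h : conv (dyadicPiece a (n + j)) (dyadicPiece b j) ξ ≠ 0) :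
    supNorm ξ < 2 ^ (n + j + 1) := by
  obtain ⟨η, ha, hb⟩ := exists_ne_zero_of_conv_ne_zero h
  have hη := supNorm_lt_two_pow_dyadicScale η
  have hξη := supNorm_lt_two_pow_dyadicScale (ξ - η)
  rw [dyadicScale_eq_of_dyadicPiece_ne_zero ha] at hη
  rw [dyadicScale_eq_of_dyadicPiece_ne_zero hb] at hξη
  have hadd := supNorm_add_le η (ξ - η)
  rw [add_sub_cancel] at hadd
  have hj : 2 ^ j ≤ 2 ^ (n + j) := Nat.pow_le_pow_right two_pos (by omega)
  rw [pow_succ]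
  omega

noncomputable def blockConst (d : ℕ) (s : ℝ) : ℝ≥0∞ :=
  (((d : ℝ≥0∞) + 1) ^ s * 2 ^ (4 * s + 2 * d)) ^ (1/2 : ℝ)

-- The powers of `2 ^ j` cancel exactly because `σ₁ + σ₂ = d / 2`.
lemma shell_factors_mul_eq_blockConst_sq_mul {s σ₁ σ₂ : ℝ} (hsum : σ₁ + σ₂ = d / 2) (n j : ℕ) :
    (((d : ℝ≥0∞) + 1) ^ s * 2 ^ (2 * ((n + j + 1 : ℕ) : ℝ) * s))
      * (2 ^ (((j : ℝ) + 1) * d) * 2 ^ (-((2 * (j : ℝ) - 2) * σ₂)))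
      * 2 ^ (-((2 * ((n + j : ℕ) : ℝ) - 2) * (s + σ₁)))
    = blockConst d s ^ 2 * (((2 : ℝ≥0∞) ^ (-σ₁)) ^ n) ^ 2 := by
  rw [blockConst, rpow_half_sq]
  have h2 (x y : ℝ) : (2 : ℝ≥0∞) ^ x * 2 ^ y = 2 ^ (x + y) :=
    (ENNReal.rpow_add x y two_ne_zero ENNReal.ofNat_ne_top).symm
  rw [← pow_mul, ← ENNReal.rpow_natCast, ← ENNReal.rpow_mul]
  calc _ = ((d : ℝ≥0∞) + 1) ^ s * (2 ^ (2 * ((n + j + 1 : ℕ) : ℝ) * s)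
        * 2 ^ (((j : ℝ) + 1) * d) * 2 ^ (-((2 * (j : ℝ) - 2) * σ₂))
        * 2 ^ (-((2 * ((n + j : ℕ) : ℝ) - 2) * (s + σ₁)))) := by ring
    _ = ((d : ℝ≥0∞) + 1) ^ s * (2 ^ (4 * s + 2 * d) * 2 ^ (-σ₁ * ((n * 2 : ℕ) : ℝ))) := by
        rw [h2, h2, h2, h2]
        congr 2
        push_cast
        linear_combination (-2 * ((j : ℝ) - 1)) * hsum
    _ = _ := by ring

theorem wl2Norm_conv_dyadicPiece_le {s σ₁ σ₂ : ℝ} (hs : 0 ≤ s) (hσ₁ : 0 ≤ σ₁) (hσ₂ : 0 ≤ σ₂)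
    (hsum : σ₁ + σ₂ = d / 2) (a b : (Fin d → ℤ) → ℝ≥0∞) (n j : ℕ) :
    wl2Norm (weight s) (conv (dyadicPiece a (n + j)) (dyadicPiece b j))
      ≤ blockConst d s * ((2 : ℝ≥0∞) ^ (-σ₁)) ^ n
        * (wl2Norm (weight (s + σ₁)) (dyadicPiece a (n + j))
          * wl2Norm (weight σ₂) (dyadicPiece b j)) := by
  set A := dyadicPiece a (n + j)
  set B := dyadicPiece b j
  set P := ((d : ℝ≥0∞) + 1) ^ s * 2 ^ (2 * ((n + j + 1 : ℕ) : ℝ) * s)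
  set Q := (2 : ℝ≥0∞) ^ (((j : ℝ) + 1) * d) * 2 ^ (-((2 * (j : ℝ) - 2) * σ₂))
  set R := (2 : ℝ≥0∞) ^ (-((2 * ((n + j : ℕ) : ℝ) - 2) * (s + σ₁)))
  have hsupp (ξ : Fin d → ℤ) (hξ : conv A B ξ ≠ 0) :
      weight s ξ ≤ P * (1 : (Fin d → ℤ) → ℝ≥0∞) ξ := by
    rw [Pi.one_apply, mul_one]
    exact weight_le_of_supNorm_lt hs (supNorm_lt_of_conv_dyadicPiece_ne_zero hξ)
  calc wl2Norm (weight s) (conv A B) ≤ P ^ (1/2 : ℝ) * wl2Norm 1 (conv A B) :=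
        wl2Norm_le_mul_of_le hsupp
    _ ≤ P ^ (1/2 : ℝ) * ((∑' ζ, B ζ) * wl2Norm 1 A) := by
        gcongr
        exact wl2Norm_one_conv_le A B
    _ ≤ P ^ (1/2 : ℝ) * ((Q ^ (1/2 : ℝ) * wl2Norm (weight σ₂) B)
          * (R ^ (1/2 : ℝ) * wl2Norm (weight (s + σ₁)) A)) := by
        gcongr
        · exact tsum_dyadicPiece_le hσ₂ b j
        · exact wl2Norm_one_dyadicPiece_le (by linarith) a (n + j)
    _ = (P * Q * R) ^ (1/2 : ℝ) * (wl2Norm (weight (s + σ₁)) A * wl2Norm (weight σ₂) B) := by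
        rw [ENNReal.mul_rpow_of_nonneg (P * Q) R (by norm_num),
          ENNReal.mul_rpow_of_nonneg P Q (by norm_num)]
        ring
    _ = _ := by
        rw [shell_factors_mul_eq_blockConst_sq_mul hsum, ← mul_pow, sq_rpow_half]

noncomputable def highLow (a b : (Fin d → ℤ) → ℝ≥0∞) (ξ : Fin d → ℤ) : ℝ≥0∞ :=
  ∑' j, ∑' n, conv (dyadicPiece a (n + j)) (dyadicPiece b j) ξ

lemma conv_le_highLow_add (a b : (Fin d → ℤ) → ℝ≥0∞) (ξ : Fin d → ℤ) :
    conv a b ξ ≤ highLow a b ξ + highLow b a ξ := by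
  rw [conv_eq_tsum_tsum_dyadicPiece]
  refine (tsum_tsum_le_tsum_tsum_add _).trans_eq ?_
  congr 1
  exact tsum_congr fun k => tsum_congr fun n => by rw [conv_comm]

theorem wl2Norm_highLow_le {s σ₁ σ₂ : ℝ} (hs : 0 ≤ s) (hσ₁ : 0 ≤ σ₁) (hσ₂ : 0 ≤ σ₂)
    (hsum : σ₁ + σ₂ = d / 2) (a b : (Fin d → ℤ) → ℝ≥0∞) :
    wl2Norm (weight s) (highLow a b)
      ≤ blockConst d s * (1 - 2 ^ (-σ₁))⁻¹
        * (wl2Norm (weight (s + σ₁)) a * wl2Norm (weight σ₂) b) := by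
  set A := fun k => wl2Norm (weight (s + σ₁)) (dyadicPiece a k)
  set B := fun j => wl2Norm (weight σ₂) (dyadicPiece b j)
  calc wl2Norm (weight s) (highLow a b)
      ≤ ∑' j, ∑' n, wl2Norm (weight s) (conv (dyadicPiece a (n + j)) (dyadicPiece b j)) :=
        (wl2Norm_tsum_le _ _).trans (ENNReal.tsum_le_tsum fun j => wl2Norm_tsum_le _ _)
    _ ≤ ∑' j, ∑' n, blockConst d s * ((2 : ℝ≥0∞) ^ (-σ₁)) ^ n * (A (n + j) * B j) := by
        gcongr with j n
        exact wl2Norm_conv_dyadicPiece_le hs hσ₁ hσ₂ hsum a b n j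
    _ = blockConst d s * ∑' j, ∑' n, ((2 : ℝ≥0∞) ^ (-σ₁)) ^ n * A (n + j) * B j := by
        simp_rw [← ENNReal.tsum_mul_left, mul_assoc]
    _ ≤ blockConst d s * ((1 - 2 ^ (-σ₁))⁻¹ * (wl2Norm 1 A * wl2Norm 1 B)) := by
        gcongr
        exact tsum_tsum_geom_mul_le _ A B
    _ = _ := by
        rw [wl2Norm_one_wl2Norm_dyadicPiece, wl2Norm_one_wl2Norm_dyadicPiece, mul_assoc]

noncomputable def productConst (d : ℕ) (s σ : ℝ) : ℝ≥0∞ := blockConst d s * (1 - 2 ^ (-σ))⁻¹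

lemma productConst_ne_top {s σ : ℝ} (hs : 0 ≤ s) (hσ : 0 < σ) : productConst d s σ ≠ ⊤ := by
  have hρ : (2 : ℝ≥0∞) ^ (-σ) < 1 :=
    ENNReal.rpow_lt_one_of_one_lt_of_neg (by norm_num) (neg_neg_of_pos hσ)
  refine ENNReal.mul_ne_top (ENNReal.rpow_ne_top_of_nonneg (by norm_num) ?_)
    (ENNReal.inv_ne_top.2 (tsub_pos_of_lt hρ).ne')
  exact ENNReal.mul_ne_top (ENNReal.rpow_ne_top_of_nonneg hs (by simp))
    (ENNReal.rpow_ne_top_of_ne_zero two_ne_zero ENNReal.ofNat_ne_top)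

theorem wl2Norm_conv_le {s s₁ s₂ t₁ t₂ : ℝ} (hs : 0 ≤ s) (hs₁ : 0 ≤ s₁) (hs₂ : 0 ≤ s₂)
    (ht₁ : 0 ≤ t₁) (ht₂ : 0 ≤ t₂) (hsum : s₁ + s₂ = d / 2) (htsum : t₁ + t₂ = d / 2)
    (a b : (Fin d → ℤ) → ℝ≥0∞) :
    wl2Norm (weight s) (conv a b)
      ≤ productConst d s s₁ * (wl2Norm (weight (s + s₁)) a * wl2Norm (weight s₂) b)
        + productConst d s t₂ * (wl2Norm (weight t₁) a * wl2Norm (weight (s + t₂)) b) := by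
  calc wl2Norm (weight s) (conv a b) ≤ wl2Norm (weight s) (highLow a b + highLow b a) :=
        wl2Norm_mono _ (conv_le_highLow_add a b)
    _ ≤ wl2Norm (weight s) (highLow a b) + wl2Norm (weight s) (highLow b a) :=
        wl2Norm_add_le _ _ _
    _ ≤ _ := by
        rw [mul_comm (wl2Norm (weight t₁) a)]
        exact add_le_add (wl2Norm_highLow_le hs hs₁ hs₂ hsum a b)
          (wl2Norm_highLow_le hs ht₂ ht₁ (by linarith) b a)

lemma enorm_pairProd_le_conv (f g : (Fin d → ℤ) → ℂ) (ξ : Fin d → ℤ) :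
    ‖pairProd d f g ξ‖ₑ ≤ conv (fun η => ‖f η‖ₑ) (fun η => ‖g η‖ₑ) ξ :=
  enorm_tsum_le_tsum_enorm.trans_eq (by simp [conv, enorm_mul])

end SobolevProduct

open SobolevProduct

theorem stmt_4_general (d : ℕ) (s s₁ s₂ t₁ t₂ : ℝ)
    (hs : 0 ≤ s) (hs₁ : 0 < s₁) (hs₂ : 0 < s₂) (ht₁ : 0 < t₁) (ht₂ : 0 < t₂)
    (hsum : s₁ + s₂ = (d : ℝ)/2) (htsum : t₁ + t₂ = (d : ℝ)/2) :
    ∃ C : ℝ, 0 < C ∧ ∀ f g : (Fin d → ℤ) → ℂ,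
      sobNorm d (s + s₁) f ≠ ⊤ → sobNorm d s₂ g ≠ ⊤ →
      sobNorm d t₁ f ≠ ⊤ → sobNorm d (s + t₂) g ≠ ⊤ →
      sobNorm d s (pairProd d f g) ≤
        ENNReal.ofReal C * (sobNorm d (s + s₁) f * sobNorm d s₂ g +
          sobNorm d t₁ f * sobNorm d (s + t₂) g) := by
  set K := productConst d s s₁ + productConst d s t₂
  have hK : K ≠ ⊤ :=
    ENNReal.add_ne_top.2 ⟨productConst_ne_top hs hs₁, productConst_ne_top hs ht₂⟩
  have hKC : K ≤ ENNReal.ofReal (K.toReal + 1) :=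
    (ENNReal.le_ofReal_iff_toReal_le hK (by positivity)).2 (by linarith)
  refine ⟨K.toReal + 1, by positivity, fun f g _ _ _ _ => ?_⟩
  simp only [sobNorm_eq_wl2Norm]
  set a : (Fin d → ℤ) → ℝ≥0∞ := fun ξ => ‖f ξ‖ₑ
  set b : (Fin d → ℤ) → ℝ≥0∞ := fun ξ => ‖g ξ‖ₑ
  calc wl2Norm (weight s) (fun ξ => ‖pairProd d f g ξ‖ₑ) ≤ wl2Norm (weight s) (conv a b) :=
        wl2Norm_mono _ (enorm_pairProd_le_conv f g)
    _ ≤ _ := wl2Norm_conv_le hs hs₁.le hs₂.le ht₁.le ht₂.le hsum htsum a b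
    _ ≤ K * (wl2Norm (weight (s + s₁)) a * wl2Norm (weight s₂) b
        + wl2Norm (weight t₁) a * wl2Norm (weight (s + t₂)) b) := by
        rw [mul_add]
        gcongr
        exacts [le_self_add, le_add_self]
    _ ≤ _ := by gcongr

/-- Bilinear product estimate at critical total regularity `d/2`:
for `s ≥ 0`, `s₁, s₂, s̃₁, s̃₂ > 0` with `s₁ + s₂ = d/2 = s̃₁ + s̃₂`,
`‖fg‖_{Hˢ} ≲ ‖f‖_{H^{s+s₁}} ‖g‖_{H^{s₂}} + ‖f‖_{H^{s̃₁}} ‖g‖_{H^{s+s̃₂}}`,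
with constant depending only on `d, s, s₁, s₂, s̃₁, s̃₂`. -/
theorem stmt_4 (d : ℕ) (hd : 0 < d) (s s₁ s₂ t₁ t₂ : ℝ)
    (hs : 0 ≤ s) (hs₁ : 0 < s₁) (hs₂ : 0 < s₂) (ht₁ : 0 < t₁) (ht₂ : 0 < t₂)
    (hsum : s₁ + s₂ = (d : ℝ)/2) (htsum : t₁ + t₂ = (d : ℝ)/2) :
    ∃ C : ℝ, 0 < C ∧ ∀ f g : (Fin d → ℤ) → ℂ,
      sobNorm d (s + s₁) f ≠ ⊤ → sobNorm d s₂ g ≠ ⊤ →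
      sobNorm d t₁ f ≠ ⊤ → sobNorm d (s + t₂) g ≠ ⊤ →
      sobNorm d s (pairProd d f g) ≤
        ENNReal.ofReal C * (sobNorm d (s + s₁) f * sobNorm d s₂ g +
          sobNorm d t₁ f * sobNorm d (s + t₂) g) :=
  stmt_4_general d s s₁ s₂ t₁ t₂ hs hs₁ hs₂ ht₁ ht₂ hsum htsum
end

section
/- Within each equivalence class of KM-relatable collapsing maps, there is exactly one collapsing map in upper echelon form. Consequently the number of upper echelon classes on $\{2,4,\ldots,2k\}$ is at most $8^k$. -/
/-- A collapsing map: `μ(2) = 1` and `1 ≤ μ(2j) < 2j` for all `1 ≤ j ≤ k`. -/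
def IsCollapsing (k : ℕ) (μ : ℕ → ℕ) : Prop :=
  μ 2 = 1 ∧ ∀ j, 1 ≤ j → j ≤ k → 1 ≤ μ (2*j) ∧ μ (2*j) < 2*j

/-- The permutation `ρ = (2j, 2j+2) ∘ (2j+1, 2j+3)` underlying a KM acceptable move. -/
def kmPerm (j : ℕ) : Equiv.Perm ℕ :=
  (Equiv.swap (2*j) (2*j + 2)).trans (Equiv.swap (2*j + 1) (2*j + 3))

/-- The move `KM(ρ)` with `ρ = (2j,2j+2)∘(2j+1,2j+3)` is acceptable for `μ`. -/
def Acceptable (k : ℕ) (μ : ℕ → ℕ) (j : ℕ) : Prop :=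
  2 ≤ j ∧ j ≤ k - 1 ∧ μ (2*j) ≠ μ (2*j + 2) ∧ μ (2*j + 2) < 2*j

/-- `μ'` is obtained from `μ` by one acceptable move: `μ' = ρ ∘ μ ∘ ρ⁻¹`. -/
def OneMove (k : ℕ) (μ μ' : ℕ → ℕ) : Prop :=
  ∃ j, Acceptable k μ j ∧
    ∀ l, 1 ≤ l → l ≤ k → μ' (2*l) = kmPerm j (μ (kmPerm j (2*l)))

/-- KM-relatability: the reflexive-transitive closure of acceptable moves. -/
def KMRel (k : ℕ) (μ μ' : ℕ → ℕ) : Prop :=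
  Relation.ReflTransGen (OneMove k) μ μ'

/-- Upper echelon form: `μ(2j) ≤ μ(2j+2)` for all `1 ≤ j ≤ k-1`. -/
def UpperEchelon (k : ℕ) (μ : ℕ → ℕ) : Prop :=
  ∀ j, 1 ≤ j → j ≤ k - 1 → μ (2*j) ≤ μ (2*j + 2)

/-- The set of (normalized) collapsing maps in upper echelon form. -/
def EchelonSet (k : ℕ) : Set (ℕ → ℕ) :=
  {μ | IsCollapsing k μ ∧ UpperEchelon k μ ∧
    ∀ n, ¬ (∃ l, 1 ≤ l ∧ l ≤ k ∧ n = 2*l) → μ n = 0}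

/-!
Read a collapsing map as a forest: node `l ∈ {1, …, k}` hangs from the slot `μ (2 * l)`, one of
the two slots `2 m, 2 m + 1` of an earlier node `m` (node `0` is the root). A KM move at `j`
exchanges the labels of the nodes `j` and `j + 1`, moving slots blockwise along; composing moves,
KM-relatable maps differ by a relabeling `π` of `1, …, k` that keeps the order of the nodes
hanging from a common slot. A move undoing a descent `μ (2 * j) > μ (2 * j + 2)` lowers
`(μ (2 * l))ₗ` lexicographically, so moves reach an upper echelon form. If two echelon forms
differ by such a relabeling and `l` is the first node it moves, then `l < π l`, and monotonicity
of both maps forces `l` and `π⁻¹ l` to hang from the same slot; stability then gives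
`π l < π (π⁻¹ l) = l`. For the count, `l ↦ μ (2 * l) + l` is strictly increasing on an echelon
form with values below `3 * k`, so an echelon form is determined by a subset of `{0, …, 3k - 1}`.
-/

open Equiv

theorem Equiv.Perm.apply_mem_of_forall_notMem {α : Type*} {π : Perm α} {s : Set α}
    (h : ∀ x ∉ s, π x = x) {x : α} (hx : x ∈ s) : π x ∈ s := by
  by_contra hπx
  exact hπx ((π.injective (h _ hπx)).symm ▸ hx)

theorem Equiv.Perm.le_apply_of_forall_lt {α : Type*} [LinearOrder α] (π : Perm α) {l : α}
    (h : ∀ n < l, π n = n) : l ≤ π l := by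
  by_contra! hlt
  exact (π.injective (h _ hlt)).not_lt hlt

theorem Equiv.swap_add_one_apply_lt {j x y : ℕ} (hxy : x < y) (hne : ¬(x = j ∧ y = j + 1)) :
    swap j (j + 1) x < swap j (j + 1) y := by
  simp only [swap_apply_def]
  split_ifs <;> omega

def blockPerm : Perm ℕ →* Perm ℕ where
  toFun π :=
    { toFun := fun n => 2 * π (n / 2) + n % 2
      invFun := fun n => 2 * π.symm (n / 2) + n % 2
      left_inv := fun n => by
        simp only
        rw [show (2 * π (n / 2) + n % 2) / 2 = π (n / 2) by omega, symm_apply_apply]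
        omega
      right_inv := fun n => by
        simp only
        rw [show (2 * π.symm (n / 2) + n % 2) / 2 = π.symm (n / 2) by omega,
          apply_symm_apply]
        omega }
  map_one' := by
    ext n
    simp only [coe_fn_mk, Perm.one_apply]
    omega
  map_mul' σ π := by
    ext n
    simp only [coe_fn_mk, Perm.mul_apply]
    rw [show (2 * π (n / 2) + n % 2) / 2 = π (n / 2) by omega]
    omega

theorem blockPerm_apply (π : Perm ℕ) (n : ℕ) : blockPerm π n = 2 * π (n / 2) + n % 2 := rfl

theorem blockPerm_two_mul (π : Perm ℕ) (m : ℕ) : blockPerm π (2 * m) = 2 * π m := by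
  rw [blockPerm_apply]
  simp

theorem blockPerm_apply_eq_self {π : Perm ℕ} {n : ℕ} (h : π (n / 2) = n / 2) :
    blockPerm π n = n := by
  rw [blockPerm_apply, h]
  omega

theorem kmPerm_eq_blockPerm (j : ℕ) : kmPerm j = blockPerm (swap j (j + 1)) := by
  ext n
  simp only [kmPerm, Equiv.trans_apply, blockPerm_apply, swap_apply_def]
  split_ifs <;> omega

theorem kmPerm_apply_of_lt {j n : ℕ} (h : n < 2 * j) : kmPerm j n = n := by
  rw [kmPerm_eq_blockPerm]
  exact blockPerm_apply_eq_self (swap_apply_of_ne_of_ne (by omega) (by omega))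

theorem kmPerm_two_mul_self (j : ℕ) : kmPerm j (2 * j) = 2 * j + 2 := by
  rw [kmPerm_eq_blockPerm, blockPerm_two_mul, swap_apply_left]
  ring

structure IsRelabeling (k : ℕ) (π : Perm ℕ) (μ ν : ℕ → ℕ) : Prop where
  apply_of_notMem : ∀ n ∉ Set.Icc 1 k, π n = n
  map_two_mul : ∀ m ∈ Set.Icc 1 k, ν (2 * π m) = blockPerm π (μ (2 * m))
  stable : ∀ m ∈ Set.Icc 1 k, ∀ m' ∈ Set.Icc 1 k, m < m' → μ (2 * m) = μ (2 * m') → π m < π m'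

namespace IsRelabeling

variable {k : ℕ} {π σ : Perm ℕ} {μ ν ρ : ℕ → ℕ}

theorem apply_mem (h : IsRelabeling k π μ ν) {m : ℕ} (hm : m ∈ Set.Icc 1 k) :
    π m ∈ Set.Icc 1 k :=
  π.apply_mem_of_forall_notMem h.apply_of_notMem hm

theorem inv_apply_of_notMem (h : IsRelabeling k π μ ν) {n : ℕ} (hn : n ∉ Set.Icc 1 k) :
    π⁻¹ n = n :=
  Perm.inv_eq_iff_eq.2 (h.apply_of_notMem n hn).symm

theorem inv_apply_mem (h : IsRelabeling k π μ ν) {m : ℕ} (hm : m ∈ Set.Icc 1 k) :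
    π⁻¹ m ∈ Set.Icc 1 k :=
  (π⁻¹).apply_mem_of_forall_notMem (fun _ => h.inv_apply_of_notMem) hm

theorem refl (k : ℕ) (μ : ℕ → ℕ) : IsRelabeling k 1 μ μ where
  apply_of_notMem _ _ := rfl
  map_two_mul _ _ := by simp
  stable _ _ _ _ hmm' _ := hmm'

theorem symm (h : IsRelabeling k π μ ν) : IsRelabeling k π⁻¹ ν μ where
  apply_of_notMem _ := h.inv_apply_of_notMem
  map_two_mul m hm := by
    have hm₀ := h.map_two_mul _ (h.inv_apply_mem hm)
    simp only [Perm.coe_inv, apply_symm_apply] at hm₀ ⊢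
    rw [hm₀, map_inv, Perm.coe_inv, symm_apply_apply]
  stable m hm m' hm' hmm' hν := by
    have hμ : μ (2 * π⁻¹ m) = μ (2 * π⁻¹ m') := by
      apply (blockPerm π).injective
      rw [← h.map_two_mul _ (h.inv_apply_mem hm), ← h.map_two_mul _ (h.inv_apply_mem hm')]
      simpa only [Perm.coe_inv, apply_symm_apply] using hν
    refine lt_of_le_of_ne (not_lt.1 fun hlt => ?_) (fun heq => hmm'.ne (π⁻¹.injective heq))
    have := h.stable _ (h.inv_apply_mem hm') _ (h.inv_apply_mem hm) hlt hμ.symm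
    simp only [Perm.coe_inv, apply_symm_apply] at this
    exact lt_asymm this hmm'

theorem trans (h : IsRelabeling k π μ ν) (h' : IsRelabeling k σ ν ρ) :
    IsRelabeling k (σ * π) μ ρ where
  apply_of_notMem n hn := by
    rw [Perm.mul_apply, h.apply_of_notMem n hn, h'.apply_of_notMem n hn]
  map_two_mul m hm := by
    rw [Perm.mul_apply, h'.map_two_mul _ (h.apply_mem hm), h.map_two_mul m hm, map_mul,
      Perm.mul_apply]
  stable m hm m' hm' hmm' hμ := by
    refine h'.stable _ (h.apply_mem hm) _ (h.apply_mem hm') (h.stable m hm m' hm' hmm' hμ) ?_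
    rw [h.map_two_mul m hm, h.map_two_mul m' hm', hμ]

theorem isCollapsing (h : IsRelabeling k π μ ν) (hk : 1 ≤ k) (hμ : IsCollapsing k μ)
    (hparent : ∀ m ∈ Set.Icc 1 k, π (μ (2 * m) / 2) < π m) : IsCollapsing k ν := by
  have hbound : ∀ l, 1 ≤ l → l ≤ k → 1 ≤ ν (2 * l) ∧ ν (2 * l) < 2 * l := by
    intro l hl hlk
    obtain ⟨m, hm, rfl⟩ : ∃ m ∈ Set.Icc 1 k, π m = l :=
      ⟨π⁻¹ l, h.inv_apply_mem ⟨hl, hlk⟩, π.apply_symm_apply l⟩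
    have hμm := hμ.2 m hm.1 hm.2
    have hzero : blockPerm π 0 = 0 :=
      blockPerm_apply_eq_self (by simpa using h.apply_of_notMem 0 (by simp))
    rw [h.map_two_mul m hm]
    refine ⟨Nat.one_le_iff_ne_zero.2 fun h0 => ?_, ?_⟩
    · have := (blockPerm π).injective (h0.trans hzero.symm)
      omega
    · have := hparent m hm
      rw [blockPerm_apply]
      omega
  obtain ⟨h1, h2⟩ := hbound 1 le_rfl hk
  rw [mul_one] at h1 h2
  exact ⟨by omega, hbound⟩

end IsRelabeling

theorem Acceptable.isRelabeling {k j : ℕ} {μ μ' : ℕ → ℕ} (hj : Acceptable k μ j)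
    (hμ' : ∀ l, 1 ≤ l → l ≤ k → μ' (2 * l) = kmPerm j (μ (kmPerm j (2 * l)))) :
    IsRelabeling k (swap j (j + 1)) μ μ' := by
  obtain ⟨hj2, hjk, hne, -⟩ := hj
  have hfix : ∀ n ∉ Set.Icc 1 k, swap j (j + 1) n = n := fun n hn =>
    swap_apply_of_ne_of_ne (by rintro rfl; exact hn ⟨by omega, by omega⟩)
      (by rintro rfl; exact hn ⟨by omega, by omega⟩)
  refine ⟨hfix, fun m hm => ?_, fun m hm m' hm' hmm' hμ => ?_⟩
  · have hτm := (swap j (j + 1)).apply_mem_of_forall_notMem hfix hm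
    rw [hμ' _ hτm.1 hτm.2, kmPerm_eq_blockPerm, blockPerm_two_mul, swap_apply_self]
  · refine swap_add_one_apply_lt hmm' ?_
    rintro ⟨rfl, rfl⟩
    exact hne (by rwa [mul_add, mul_one] at hμ)

theorem OneMove.exists_isRelabeling {k : ℕ} {μ μ' : ℕ → ℕ} (h : OneMove k μ μ') :
    ∃ π, IsRelabeling k π μ μ' :=
  let ⟨_, hj, hμ'⟩ := h
  ⟨_, hj.isRelabeling hμ'⟩

theorem OneMove.isCollapsing {k : ℕ} {μ μ' : ℕ → ℕ} (h : OneMove k μ μ')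
    (hμ : IsCollapsing k μ) : IsCollapsing k μ' := by
  obtain ⟨j, hj, hμ'⟩ := h
  have ⟨hj2, hjk, _, hlt⟩ := hj
  refine (hj.isRelabeling hμ').isCollapsing (by omega) hμ fun m hm => ?_
  have hm2 := (hμ.2 m hm.1 hm.2).2
  refine swap_add_one_apply_lt (by omega) ?_
  rintro ⟨hparent, rfl⟩
  rw [mul_add, mul_one] at hparent
  omega

theorem KMRel.exists_isRelabeling {k : ℕ} {μ ν : ℕ → ℕ} (h : KMRel k μ ν) :
    ∃ π, IsRelabeling k π μ ν := by
  induction h with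
  | refl => exact ⟨1, .refl k μ⟩
  | tail _ hmove ih =>
    obtain ⟨π, hπ⟩ := ih
    obtain ⟨τ, hτ⟩ := hmove.exists_isRelabeling
    exact ⟨τ * π, hπ.trans hτ⟩

def nodeValues (k : ℕ) (μ : ℕ → ℕ) : Fin k → ℕ := fun i => μ (2 * (i + 1))

theorem exists_oneMove_toLex_lt {k : ℕ} {μ : ℕ → ℕ} (hμ : IsCollapsing k μ)
    (hne : ¬ UpperEchelon k μ) :
    ∃ μ', OneMove k μ μ' ∧ toLex (nodeValues k μ') < toLex (nodeValues k μ) := by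
  simp only [UpperEchelon, not_forall, not_le] at hne
  obtain ⟨j, hj1, hjk, hinv⟩ := hne
  have hj2 : 2 ≤ j := by
    by_contra! hj
    obtain rfl : j = 1 := by omega
    have := (hμ.2 2 (by norm_num) (by omega)).1
    norm_num [hμ.1] at this hinv
    omega
  have hμj := (hμ.2 j hj1 (by omega)).2
  refine ⟨fun n => kmPerm j (μ (kmPerm j n)),
    ⟨j, ⟨hj2, hjk, hinv.ne', by omega⟩, fun _ _ _ => rfl⟩, ⟨⟨j - 1, by omega⟩, fun i hi => ?_, ?_⟩⟩
  · have hi : (i : ℕ) < j - 1 := hi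
    have := (hμ.2 (i + 1) (by omega) (by omega)).2
    show kmPerm j (μ (kmPerm j (2 * (i + 1)))) = μ (2 * (i + 1))
    rw [kmPerm_apply_of_lt (n := 2 * (i + 1)) (by omega), kmPerm_apply_of_lt (by omega)]
  · show kmPerm j (μ (kmPerm j (2 * (j - 1 + 1)))) < μ (2 * (j - 1 + 1))
    rw [Nat.sub_add_cancel hj1, kmPerm_two_mul_self, kmPerm_apply_of_lt (by omega)]
    exact hinv

theorem exists_kmRel_upperEchelon {k : ℕ} (μ : ℕ → ℕ) (hμ : IsCollapsing k μ) :
    ∃ ν, IsCollapsing k ν ∧ UpperEchelon k ν ∧ KMRel k μ ν := by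
  induction μ using (InvImage.wf (fun μ => toLex (nodeValues k μ)) wellFounded_lt).induction with
  | _ μ ih =>
    by_cases he : UpperEchelon k μ
    · exact ⟨μ, hμ, he, .refl⟩
    obtain ⟨μ', hmove, hlt⟩ := exists_oneMove_toLex_lt hμ he
    obtain ⟨ν, hν, he', hμ'ν⟩ := ih μ' hlt (hmove.isCollapsing hμ)
    exact ⟨ν, hν, he', .head hmove hμ'ν⟩

theorem UpperEchelon.apply_le_apply {k : ℕ} {ν : ℕ → ℕ} (h : UpperEchelon k ν) {l l' : ℕ}
    (hl : 1 ≤ l) (hll' : l ≤ l') (hl' : l' ≤ k) : ν (2 * l) ≤ ν (2 * l') := by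
  induction l', hll' using Nat.le_induction with
  | base => exact le_rfl
  | succ n hln ih =>
    refine (ih (by omega)).trans ?_
    rw [mul_add, mul_one]
    exact h n (by omega) (by omega)

namespace IsRelabeling

variable {k : ℕ} {σ : Perm ℕ} {ν ν' : ℕ → ℕ}

theorem apply_eq_self_of_forall_lt (h : IsRelabeling k σ ν ν') (hν : IsCollapsing k ν)
    (he : UpperEchelon k ν) (he' : UpperEchelon k ν') {l : ℕ} (hl : l ∈ Set.Icc 1 k)
    (hlt : ∀ n < l, σ n = n) : σ l = l := by
  by_contra hne
  have hfix : ∀ v < 2 * l, blockPerm σ v = v := fun v hv =>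
    blockPerm_apply_eq_self (hlt _ (by omega))
  have hσl : l < σ l := (σ.le_apply_of_forall_lt hlt).lt_of_ne' hne
  obtain ⟨m, hσm⟩ := σ.surjective l
  have hm : m ∈ Set.Icc 1 k := by
    by_contra hm
    rw [h.apply_of_notMem m hm] at hσm
    exact hm (hσm ▸ hl)
  have hlm : l < m := by
    by_contra! hml
    rcases hml.lt_or_eq with hml | rfl
    · rw [hlt m hml] at hσm
      omega
    · exact hne hσm
  have hv := (hν.2 l hl.1 hl.2).2
  have e1 : ν' (2 * σ l) = ν (2 * l) := by rw [h.map_two_mul l hl, hfix _ hv]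
  have hw : ν' (2 * l) ≤ ν (2 * l) := e1 ▸ he'.apply_le_apply hl.1 hσl.le (h.apply_mem hl).2
  have e2 : ν (2 * m) = ν' (2 * l) :=
    (blockPerm σ).injective (by rw [← h.map_two_mul m hm, hσm, hfix _ (by omega)])
  have hle : ν (2 * l) ≤ ν (2 * m) := he.apply_le_apply hl.1 hlm.le hm.2
  have := h.stable l hl m hm hlm (by omega)
  omega

theorem eq_one_of_upperEchelon (h : IsRelabeling k σ ν ν') (hν : IsCollapsing k ν)
    (he : UpperEchelon k ν) (he' : UpperEchelon k ν') : σ = 1 := by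
  refine Equiv.ext fun n => ?_
  induction n using Nat.strong_induction_on with
  | _ n ih =>
    by_cases hn : n ∈ Set.Icc 1 k
    · exact h.apply_eq_self_of_forall_lt hν he he' hn ih
    · exact h.apply_of_notMem n hn

end IsRelabeling

theorem KMRel.eq_of_upperEchelon {k : ℕ} {μ ν ν' : ℕ → ℕ} (h : KMRel k μ ν) (h' : KMRel k μ ν')
    (hν : IsCollapsing k ν) (he : UpperEchelon k ν) (he' : UpperEchelon k ν') {l : ℕ}
    (hl : l ∈ Set.Icc 1 k) : ν' (2 * l) = ν (2 * l) := by
  obtain ⟨π, hπ⟩ := h.exists_isRelabeling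
  obtain ⟨π', hπ'⟩ := h'.exists_isRelabeling
  have hσ := hπ.symm.trans hπ'
  have := hσ.map_two_mul l hl
  rwa [hσ.eq_one_of_upperEchelon hν he he', map_one, Perm.one_apply, Perm.one_apply] at this

theorem monotone_nodeValues {k : ℕ} {μ : ℕ → ℕ} (h : UpperEchelon k μ) :
    Monotone (nodeValues k μ) :=
  fun _ i' hii' => h.apply_le_apply (Nat.le_add_left 1 _) (Nat.succ_le_succ hii') i'.isLt

def echelonCode (k : ℕ) (μ : ℕ → ℕ) : Finset ℕ :=
  Finset.univ.image (nodeValues k μ + Fin.val)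

theorem echelonCode_injOn (k : ℕ) : Set.InjOn (echelonCode k) (EchelonSet k) := by
  intro μ hμ ν hν hcode
  have hrange := congrArg (fun s : Finset ℕ => (s : Set ℕ)) hcode
  simp only [echelonCode, Finset.coe_image, Finset.coe_univ, Set.image_univ] at hrange
  have hvals : nodeValues k μ = nodeValues k ν := add_right_cancel <|
    ((monotone_nodeValues hμ.2.1).add_strictMono Fin.val_strictMono).range_inj
      ((monotone_nodeValues hν.2.1).add_strictMono Fin.val_strictMono) |>.1 hrange
  funext n
  by_cases hn : ∃ l, 1 ≤ l ∧ l ≤ k ∧ n = 2 * l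
  · obtain ⟨l, hl, hlk, rfl⟩ := hn
    simpa [nodeValues, Nat.sub_add_cancel hl] using congrFun hvals ⟨l - 1, by omega⟩
  · rw [hμ.2.2 n hn, hν.2.2 n hn]

theorem echelonCode_mem_powerset {k : ℕ} {μ : ℕ → ℕ} (hμ : μ ∈ EchelonSet k) :
    echelonCode k μ ∈ (Finset.range (3 * k)).powerset := by
  rw [Finset.mem_powerset]
  intro x hx
  simp only [echelonCode, Finset.mem_image, Finset.mem_univ, true_and, Pi.add_apply,
    nodeValues] at hx
  obtain ⟨i, rfl⟩ := hx
  have := (hμ.1.2 (i + 1) (by omega) i.isLt).2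
  rw [Finset.mem_range]
  omega

theorem finite_echelonSet (k : ℕ) : (EchelonSet k).Finite :=
  .of_injOn (fun _ hμ => echelonCode_mem_powerset hμ) (echelonCode_injOn k)
    (Finset.finite_toSet _)

theorem ncard_echelonSet_le (k : ℕ) : (EchelonSet k).ncard ≤ 8 ^ k :=
  calc (EchelonSet k).ncard ≤ ((Finset.range (3 * k)).powerset : Set (Finset ℕ)).ncard :=
        Set.ncard_le_ncard_of_injOn _ (fun _ hμ => echelonCode_mem_powerset hμ)
          (echelonCode_injOn k)
    _ = 8 ^ k := by
        rw [Set.ncard_coe_finset, Finset.card_powerset, Finset.card_range, pow_mul]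
        norm_num

theorem stmt_10_general (k : ℕ) :
    (∀ μ, IsCollapsing k μ → ∃ ν, IsCollapsing k ν ∧ UpperEchelon k ν ∧ KMRel k μ ν ∧
      ∀ ν', IsCollapsing k ν' → UpperEchelon k ν' → KMRel k μ ν' →
        ∀ l, 1 ≤ l → l ≤ k → ν' (2*l) = ν (2*l)) ∧
    (EchelonSet k).Finite ∧ (EchelonSet k).ncard ≤ 8 ^ k := by
  refine ⟨fun μ hμ => ?_, finite_echelonSet k, ncard_echelonSet_le k⟩
  obtain ⟨ν, hν, he, hμν⟩ := exists_kmRel_upperEchelon μ hμ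
  exact ⟨ν, hν, he, hμν, fun ν' _ he' hμν' l hl hlk =>
    hμν.eq_of_upperEchelon hμν' hν he he' ⟨hl, hlk⟩⟩

/-- Within each KM-equivalence class of collapsing maps there is
exactly one upper echelon form (unique as a function on the index set
`{2,4,…,2k}`), and the number of upper echelon forms is at most `8^k`. -/
theorem stmt_10 (k : ℕ) (hk : 1 ≤ k) :
    (∀ μ, IsCollapsing k μ → ∃ ν, IsCollapsing k ν ∧ UpperEchelon k ν ∧ KMRel k μ ν ∧
      ∀ ν', IsCollapsing k ν' → UpperEchelon k ν' → KMRel k μ ν' →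
        ∀ l, 1 ≤ l → l ≤ k → ν' (2*l) = ν (2*l)) ∧
    (EchelonSet k).Finite ∧ (EchelonSet k).ncard ≤ 8 ^ k :=
  stmt_10_general k
end

section
/- Every equivalence class of wildly relatable tamed collapsing map pairs $(\mu, \text{sgn})$ contains a unique reference pair, i.e. a tamed pair in which, in every left branch of the associated tree, all $+$-signed nodes come before all $-$-signed nodes. Moreover, for every pair $(\mu,\text{sgn})$ in the class there is a unique allowable permutation $\rho$ with $(\mu,\text{sgn}) = W(\rho)(\hat\mu,\hat{\text{sgn}})$, where $(\hat\mu,\hat{\text{sgn}})$ is the reference pair. -/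
/-- `l` is an index of the domain `{2,4,…,2k}` (node `2l`). -/
def InDom (k l : ℕ) : Prop := 1 ≤ l ∧ l ≤ k

/-- The extension of a collapsing map to odd arguments: `μ(2l+1) := μ(2l)`. -/
def extMap (μ : ℕ → ℕ) : ℕ → ℕ :=
  fun n => if n % 2 = 0 then μ n else μ (n - 1)

/-- The extension of a sign function (`true` = `+`) to odd arguments:
`sgn(2l+1) := sgn(2l)`. -/
def extSgn (sgn : ℕ → Bool) : ℕ → Bool :=
  fun n => if n % 2 = 0 then sgn n else sgn (n - 1)

/-- The tier value `t(n)`: the least `q` with `μ^q(n) = 1` (extended map). -/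
noncomputable def tier (μ : ℕ → ℕ) (n : ℕ) : ℕ :=
  sInf {q | (extMap μ)^[q] n = 1}

/-- A signed collapsing pair `(μ, sgn)` is tamed: the four tier-ordering
conditions of Definition 4.14. -/
def Tamed (k : ℕ) (μ : ℕ → ℕ) (sgn : ℕ → Bool) : Prop :=
  (∀ l r, InDom k l → InDom k r →
      tier μ (2*l) < tier μ (2*r) → 2*l < 2*r) ∧
  (∀ l r, InDom k l → InDom k r → tier μ (2*l) = tier μ (2*r) →
      extMap μ (extMap μ (2*l)) = extMap μ (extMap μ (2*r)) →
      extSgn sgn (μ (2*l)) = extSgn sgn (μ (2*r)) →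
      μ (2*l) < μ (2*r) → 2*l < 2*r) ∧
  (∀ l r, InDom k l → InDom k r → tier μ (2*l) = tier μ (2*r) →
      extMap μ (extMap μ (2*l)) = extMap μ (extMap μ (2*r)) →
      extSgn sgn (μ (2*l)) = true → extSgn sgn (μ (2*r)) = false → 2*l < 2*r) ∧
  (∀ l r, InDom k l → InDom k r → tier μ (2*l) = tier μ (2*r) →
      extMap μ (extMap μ (2*l)) ≠ extMap μ (extMap μ (2*r)) →
      μ (2*l) < μ (2*r) → 2*l < 2*r)

/-- A permutation of `ℕ` arising as the extension of a permutation of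
`{2,4,…,2k}` by `ρ(2l+1) = ρ(2l)+1`, fixing everything else. -/
def ExtPerm (k : ℕ) (ρ : Equiv.Perm ℕ) : Prop :=
  (∀ n, (∀ l, InDom k l → n ≠ 2*l ∧ n ≠ 2*l + 1) → ρ n = n) ∧
  (∀ l, InDom k l → (∃ m, InDom k m ∧ ρ (2*l) = 2*m) ∧ ρ (2*l + 1) = ρ (2*l) + 1)

/-- `ρ` is allowable with respect to `(μ, sgn)`: it preserves each fiber
`G_i = {2j : μ(2j) = i}` and is order-preserving on same-sign elements of each
fiber. -/
def Allowable (k : ℕ) (μ : ℕ → ℕ) (sgn : ℕ → Bool) (ρ : Equiv.Perm ℕ) : Prop :=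
  ExtPerm k ρ ∧
  (∀ l, InDom k l → μ (ρ (2*l)) = μ (2*l)) ∧
  (∀ l r, InDom k l → InDom k r → l < r → μ (2*l) = μ (2*r) →
    sgn (2*l) = sgn (2*r) → ρ (2*l) < ρ (2*r))

/-- `(μ', sgn') = W(ρ)(μ, sgn)`: the wild move, `μ' = ρ ∘ μ`, `sgn' = sgn ∘ ρ⁻¹`. -/
def WildMoveEq (k : ℕ) (ρ : Equiv.Perm ℕ) (μ : ℕ → ℕ) (sgn : ℕ → Bool)
    (μ' : ℕ → ℕ) (sgn' : ℕ → Bool) : Prop :=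
  (∀ l, InDom k l → μ' (2*l) = ρ (μ (2*l))) ∧
  (∀ l, InDom k l → sgn' (ρ (2*l)) = sgn (2*l))

/-- `(μ, sgn)` and `(μ', sgn')` are wildly relatable. -/
def WildRel (k : ℕ) (μ : ℕ → ℕ) (sgn : ℕ → Bool)
    (μ' : ℕ → ℕ) (sgn' : ℕ → Bool) : Prop :=
  ∃ ρ, Allowable k μ sgn ρ ∧ WildMoveEq k ρ μ sgn μ' sgn'

/-- A reference pair: a tamed pair in which, in every left branch (= fiber of `μ`),
all `+` nodes come before all `−` nodes. -/
def IsReference (k : ℕ) (μ : ℕ → ℕ) (sgn : ℕ → Bool) : Prop :=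
  Tamed k μ sgn ∧
  ∀ l r, InDom k l → InDom k r → l < r → μ (2*l) = μ (2*r) →
    sgn (2*r) = true → sgn (2*l) = true

theorem List.Pairwise.rel_of_lt {α : Type*} [Preorder α] {Q : α → α → Prop} {L : List α}
    (hL : L.Pairwise (· < ·)) (hQ : L.Pairwise Q) {a b : α} (ha : a ∈ L) (hb : b ∈ L)
    (hab : a < b) : Q a b := by
  induction L with
  | nil => simp at ha
  | cons x L ih =>
    rw [List.pairwise_cons] at hL hQ
    rcases List.mem_cons.1 ha with rfl | ha' <;> rcases List.mem_cons.1 hb with rfl | hb'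
    · exact absurd hab (lt_irrefl _)
    · exact hQ.1 b hb'
    · exact absurd (hL.1 a ha') (lt_asymm hab)
    · exact ih hL.2 hQ.2 ha' hb'

theorem List.map_getD_idxOf {α β : Type*} [DecidableEq α] {L : List α} {T : List β}
    (hL : L.Nodup) (hlen : T.length = L.length) (d : α → β) : L.map (fun x => T.getD (L.idxOf x) (d x)) = T := by
  refine List.ext_getElem (by simp [hlen]) fun i h₁ h₂ => ?_
  rw [List.getElem_map, hL.idxOf_getElem, List.getD_eq_getElem]

/-- The order listing the `+` elements before the `−` ones, each group increasingly. -/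
def SignLT (s : ℕ → Bool) (a b : ℕ) : Prop :=
  s a = true ∧ s b = false ∨ s a = s b ∧ a < b

def signSort (s : ℕ → Bool) (L : List ℕ) : List ℕ :=
  L.filter s ++ L.filter (fun x => !s x)

section SignSort

variable {s : ℕ → Bool} {L : List ℕ}

theorem signLT_iff {a b : ℕ} :
    SignLT s a b ↔ (s b = true → s a = true) ∧ (s a = s b → a < b) := by
  unfold SignLT
  cases s a <;> cases s b <;> simp

theorem SignLT.asymm {a b : ℕ} (h : SignLT s a b) : ¬SignLT s b a := by
  unfold SignLT at *
  grind

theorem signSort_perm (s : ℕ → Bool) (L : List ℕ) : (signSort s L).Perm L :=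
  List.filter_append_perm _ _

theorem pairwise_signSort (hL : L.Pairwise (· < ·)) : (signSort s L).Pairwise (SignLT s) := by
  simp only [signSort, List.pairwise_append, List.mem_filter]
  refine ⟨(hL.filter _).imp_of_mem ?_, (hL.filter _).imp_of_mem ?_, ?_⟩
  · intro a b ha hb hab
    simp only [List.mem_filter] at ha hb
    exact Or.inr ⟨ha.2.trans hb.2.symm, hab⟩
  · intro a b ha hb hab
    simp only [List.mem_filter, Bool.not_eq_eq_eq_not, Bool.not_true] at ha hb
    exact Or.inr ⟨ha.2.trans hb.2.symm, hab⟩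
  · rintro a ⟨-, ha⟩ b ⟨-, hb⟩
    simp only [Bool.not_eq_eq_eq_not, Bool.not_true] at hb
    exact Or.inl ⟨ha, hb⟩

theorem map_eq_signSort {π : ℕ → ℕ} (hL : L.Pairwise (· < ·)) (hperm : (L.map π).Perm L)
    (hπ : ∀ a ∈ L, ∀ b ∈ L, a < b → SignLT s (π a) (π b)) : L.map π = signSort s L :=
  (hperm.trans (signSort_perm s L).symm).eq_of_pairwise (fun _ _ _ _ h h' => (h.asymm h').elim)
    (List.pairwise_map.2 (hL.imp_of_mem fun ha hb hab => hπ _ ha _ hb hab)) (pairwise_signSort hL)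

end SignSort

def idxFiber (k : ℕ) (μ : ℕ → ℕ) (m : ℕ) : List ℕ :=
  ((Finset.Icc 1 k).filter (fun x => μ (2 * x) = μ (2 * m))).sort

/-- A permutation of the indices `{1,…,k}` preserving the fibers of `m ↦ μ(2m)`. -/
def IsFiberPerm (k : ℕ) (μ : ℕ → ℕ) (τ : Equiv.Perm ℕ) : Prop :=
  (∀ m, ¬InDom k m → τ m = m) ∧ ∀ m, μ (2 * τ m) = μ (2 * m)

section SortPerm

variable (k : ℕ) (μ : ℕ → ℕ) (sgn : ℕ → Bool)

theorem mem_idxFiber {m x : ℕ} : x ∈ idxFiber k μ m ↔ InDom k x ∧ μ (2 * x) = μ (2 * m) := by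
  simp [idxFiber, InDom, and_assoc]

theorem pairwise_idxFiber (m : ℕ) : (idxFiber k μ m).Pairwise (· < ·) :=
  (Finset.sortedLT_sort _).pairwise

theorem idxFiber_congr {m x : ℕ} (h : μ (2 * x) = μ (2 * m)) :
    idxFiber k μ x = idxFiber k μ m := by
  simp [idxFiber, h]

theorem self_mem_idxFiber {m : ℕ} (hm : InDom k m) : m ∈ idxFiber k μ m :=
  (mem_idxFiber k μ).2 ⟨hm, rfl⟩

/-- Sends the `i`-th element of each fiber to the `i`-th element of the fiber listed by `SignLT`;
an index outside `{1,…,k}` is not in its own fiber, so it falls through to the default `m`. -/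
def sortIdx (m : ℕ) : ℕ :=
  (signSort (fun x => sgn (2 * x)) (idxFiber k μ m)).getD ((idxFiber k μ m).idxOf m) m

theorem map_sortIdx (m : ℕ) : (idxFiber k μ m).map (sortIdx k μ sgn) =
    signSort (fun x => sgn (2 * x)) (idxFiber k μ m) := by
  rw [← List.map_getD_idxOf (pairwise_idxFiber k μ m).nodup (signSort_perm _ _).length_eq id]
  refine List.map_congr_left fun x hx => ?_
  rw [sortIdx, idxFiber_congr k μ ((mem_idxFiber k μ).1 hx).2, id]

theorem sortIdx_of_not_inDom {m : ℕ} (hm : ¬InDom k m) : sortIdx k μ sgn m = m := by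
  refine List.getD_eq_default _ _ ?_
  rw [(signSort_perm _ _).length_eq,
    List.idxOf_eq_length_iff.2 fun h => hm ((mem_idxFiber k μ).1 h).1]

theorem sortIdx_mem_idxFiber {m : ℕ} (hm : InDom k m) : sortIdx k μ sgn m ∈ idxFiber k μ m := by
  rw [← (signSort_perm _ _).mem_iff, ← map_sortIdx]
  exact List.mem_map_of_mem (self_mem_idxFiber k μ hm)

theorem sortIdx_bijective : Function.Bijective (sortIdx k μ sgn) := by
  have hmem {m} (hm : InDom k m) := (mem_idxFiber k μ).1 (sortIdx_mem_idxFiber k μ sgn hm)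
  refine ⟨fun a b hab => ?_, fun y => ?_⟩
  · by_cases ha : InDom k a <;> by_cases hb : InDom k b
    · have hnd : ((idxFiber k μ a).map (sortIdx k μ sgn)).Nodup := by
        rw [map_sortIdx, (signSort_perm _ _).nodup_iff]
        exact (pairwise_idxFiber k μ a).nodup
      refine List.inj_on_of_nodup_map hnd (self_mem_idxFiber k μ ha) ?_ hab
      rw [mem_idxFiber, ← (hmem ha).2, hab, (hmem hb).2]
      exact ⟨hb, rfl⟩
    · rw [sortIdx_of_not_inDom k μ sgn hb] at hab
      exact absurd (hab ▸ (hmem ha).1) hb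
    · rw [sortIdx_of_not_inDom k μ sgn ha] at hab
      exact absurd (hab ▸ (hmem hb).1) ha
    · rwa [sortIdx_of_not_inDom k μ sgn ha, sortIdx_of_not_inDom k μ sgn hb] at hab
  · by_cases hy : InDom k y
    · have : y ∈ (idxFiber k μ y).map (sortIdx k μ sgn) := by
        rw [map_sortIdx, (signSort_perm _ _).mem_iff]
        exact self_mem_idxFiber k μ hy
      obtain ⟨x, -, hx⟩ := List.mem_map.1 this
      exact ⟨x, hx⟩
    · exact ⟨y, sortIdx_of_not_inDom k μ sgn hy⟩

noncomputable def sortPerm : Equiv.Perm ℕ :=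
  Equiv.ofBijective _ (sortIdx_bijective k μ sgn)

theorem sortPerm_apply (m : ℕ) : sortPerm k μ sgn m = sortIdx k μ sgn m := rfl

theorem isFiberPerm_sortPerm : IsFiberPerm k μ (sortPerm k μ sgn) := by
  refine ⟨fun m hm => sortIdx_of_not_inDom k μ sgn hm, fun m => ?_⟩
  by_cases hm : InDom k m
  · exact ((mem_idxFiber k μ).1 (sortIdx_mem_idxFiber k μ sgn hm)).2
  · rw [sortPerm_apply, sortIdx_of_not_inDom k μ sgn hm]

theorem signLT_sortPerm {l r : ℕ} (hl : InDom k l) (hr : InDom k r) (hlr : l < r)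
    (hf : μ (2 * l) = μ (2 * r)) :
    SignLT (fun x => sgn (2 * x)) (sortPerm k μ sgn l) (sortPerm k μ sgn r) := by
  have hpair := pairwise_signSort (s := fun x => sgn (2 * x)) (pairwise_idxFiber k μ r)
  rw [← map_sortIdx, List.pairwise_map] at hpair
  exact (pairwise_idxFiber k μ r).rel_of_lt hpair ((mem_idxFiber k μ).2 ⟨hl, hf⟩)
    (self_mem_idxFiber k μ hr) hlr

theorem eq_sortPerm_of {τ : ℕ → ℕ}
    (hmem : ∀ m, InDom k m → InDom k (τ m) ∧ μ (2 * τ m) = μ (2 * m))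
    (hinj : ∀ a b, InDom k a → InDom k b → τ a = τ b → a = b)
    (hmono : ∀ l r, InDom k l → InDom k r → l < r → μ (2 * l) = μ (2 * r) →
      SignLT (fun x => sgn (2 * x)) (τ l) (τ r))
    {m : ℕ} (hm : InDom k m) : τ m = sortPerm k μ sgn m := by
  set L := idxFiber k μ m
  have hL : ∀ x ∈ L, InDom k x ∧ μ (2 * x) = μ (2 * m) := fun x hx => (mem_idxFiber k μ).1 hx
  have hperm : (L.map τ).Perm L := by
    refine (List.subperm_of_subset ((pairwise_idxFiber k μ m).nodup.map_on fun x hx y hy =>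
      hinj x y (hL x hx).1 (hL y hy).1) fun y hy => ?_).perm_of_length_le (by simp)
    obtain ⟨x, hx, rfl⟩ := List.mem_map.1 hy
    exact (mem_idxFiber k μ).2 ⟨(hmem x (hL x hx).1).1, ((hmem x (hL x hx).1).2).trans (hL x hx).2⟩
  have hmap : L.map τ = L.map (sortIdx k μ sgn) := by
    rw [map_sortIdx]
    exact map_eq_signSort (pairwise_idxFiber k μ m) hperm fun a ha b hb hab =>
      hmono a b (hL a ha).1 (hL b hb).1 hab ((hL a ha).2.trans (hL b hb).2.symm)
  exact List.map_inj_left.1 hmap m (self_mem_idxFiber k μ hm)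

end SortPerm

namespace IsFiberPerm

variable {k : ℕ} {μ : ℕ → ℕ} {τ : Equiv.Perm ℕ}

theorem symm (h : IsFiberPerm k μ τ) : IsFiberPerm k μ τ.symm := by
  refine ⟨fun m hm => ?_, fun m => ?_⟩
  · rw [Equiv.symm_apply_eq, h.1 m hm]
  · rw [← h.2 (τ.symm m), Equiv.apply_symm_apply]

theorem inDom (h : IsFiberPerm k μ τ) {m : ℕ} (hm : InDom k m) : InDom k (τ m) := by
  by_contra hτm
  exact hτm (by rwa [τ.injective (h.1 _ hτm)])

end IsFiberPerm

theorem extMap_eq (μ : ℕ → ℕ) (n : ℕ) : extMap μ n = μ (2 * (n / 2)) := by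
  unfold extMap
  split_ifs <;> congr 1 <;> omega

theorem extSgn_eq (sgn : ℕ → Bool) (n : ℕ) : extSgn sgn n = sgn (2 * (n / 2)) := by
  unfold extSgn
  split_ifs <;> congr 1 <;> omega

theorem extMap_two_mul (μ : ℕ → ℕ) (m : ℕ) : extMap μ (2 * m) = μ (2 * m) := by
  rw [extMap_eq, Nat.mul_div_cancel_left m two_pos]

theorem extMap_comp (g μ : ℕ → ℕ) (n : ℕ) : extMap (fun x => g (μ x)) n = g (extMap μ n) := by
  simp only [extMap_eq]

theorem ExtPerm.ext {k : ℕ} {ρ₁ ρ₂ : Equiv.Perm ℕ} (h₁ : ExtPerm k ρ₁) (h₂ : ExtPerm k ρ₂)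
    (h : ∀ l, InDom k l → ρ₁ (2 * l) = ρ₂ (2 * l)) : ρ₁ = ρ₂ := by
  ext n
  by_cases hn : InDom k (n / 2)
  · obtain ⟨l, hl, rfl | rfl⟩ : ∃ l, InDom k l ∧ (n = 2 * l ∨ n = 2 * l + 1) :=
      ⟨n / 2, hn, by omega⟩
    · exact h l hl
    · rw [(h₁.2 l hl).2, (h₂.2 l hl).2, h l hl]
  · have hfix : ∀ l, InDom k l → n ≠ 2 * l ∧ n ≠ 2 * l + 1 := fun l hl =>
      ⟨fun h => hn (by convert hl using 1; omega), fun h => hn (by convert hl using 1; omega)⟩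
    rw [h₁.1 n hfix, h₂.1 n hfix]

def pairPerm (τ : Equiv.Perm ℕ) : Equiv.Perm ℕ where
  toFun n := 2 * τ (n / 2) + n % 2
  invFun n := 2 * τ.symm (n / 2) + n % 2
  left_inv n := by
    simp only [show ∀ a, (2 * a + n % 2) / 2 = a by omega,
      show ∀ a, (2 * a + n % 2) % 2 = n % 2 by omega, Equiv.symm_apply_apply]
    omega
  right_inv n := by
    simp only [show ∀ a, (2 * a + n % 2) / 2 = a by omega,
      show ∀ a, (2 * a + n % 2) % 2 = n % 2 by omega, Equiv.apply_symm_apply]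
    omega

section PairPerm

variable (τ : Equiv.Perm ℕ)

theorem pairPerm_apply (n : ℕ) : pairPerm τ n = 2 * τ (n / 2) + n % 2 := rfl

theorem pairPerm_symm : (pairPerm τ).symm = pairPerm τ.symm := rfl

theorem pairPerm_two_mul (m : ℕ) : pairPerm τ (2 * m) = 2 * τ m := by
  rw [pairPerm_apply]
  simp

theorem pairPerm_div_two (n : ℕ) : pairPerm τ n / 2 = τ (n / 2) := by
  rw [pairPerm_apply]
  omega

theorem extSgn_pairPerm (sgn : ℕ → Bool) (n : ℕ) :
    extSgn (fun x => sgn (pairPerm τ x)) n = extSgn sgn (pairPerm τ n) := by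
  rw [extSgn_eq, extSgn_eq, pairPerm_div_two, pairPerm_two_mul]

theorem pairPerm_lt_pairPerm {a b : ℕ} (hab : a < b) (h : a / 2 < b / 2 → τ (a / 2) < τ (b / 2)) :
    pairPerm τ a < pairPerm τ b := by
  rw [pairPerm_apply, pairPerm_apply]
  rcases Nat.lt_or_ge (a / 2) (b / 2) with hlt | hge
  · have := h hlt
    omega
  · have : a / 2 = b / 2 := by omega
    rw [this]
    omega

variable {k : ℕ} {μ : ℕ → ℕ} {τ}

theorem IsFiberPerm.extPerm_pairPerm (h : IsFiberPerm k μ τ) : ExtPerm k (pairPerm τ) := by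
  refine ⟨fun n hn => ?_, fun l hl => ⟨⟨τ l, h.inDom hl, pairPerm_two_mul τ l⟩, ?_⟩⟩
  · have : ¬InDom k (n / 2) := fun hd => by have := hn _ hd; omega
    rw [pairPerm_apply, h.1 _ this]
    omega
  · rw [pairPerm_apply, pairPerm_two_mul, show (2 * l + 1) / 2 = l by omega]
    omega

theorem IsFiberPerm.extMap_pairPerm (h : IsFiberPerm k μ τ) (n : ℕ) :
    extMap μ (pairPerm τ n) = extMap μ n := by
  rw [extMap_eq, extMap_eq, pairPerm_div_two, h.2]

end PairPerm

section Tier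

variable {k : ℕ} {μ : ℕ → ℕ}

theorem IsCollapsing.extMap_lt (hμ : IsCollapsing k μ) {n : ℕ} (h₁ : 2 ≤ n) (h₂ : n ≤ 2 * k + 1) :
    1 ≤ extMap μ n ∧ extMap μ n < n := by
  have := hμ.2 (n / 2) (by omega) (by omega)
  rw [extMap_eq]
  omega

theorem IsCollapsing.exists_iterate_eq_one (hμ : IsCollapsing k μ) {n : ℕ} (h₁ : 1 ≤ n)
    (h₂ : n ≤ 2 * k + 1) : ∃ q, (extMap μ)^[q] n = 1 := by
  induction n using Nat.strong_induction_on with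
  | _ n ih =>
    rcases (show n = 1 ∨ 2 ≤ n by omega) with rfl | hn
    · exact ⟨0, rfl⟩
    · obtain ⟨h₃, h₄⟩ := hμ.extMap_lt hn h₂
      obtain ⟨q, hq⟩ := ih _ h₄ h₃ (by omega)
      exact ⟨q + 1, by rwa [Function.iterate_succ_apply]⟩

theorem IsCollapsing.tier_eq_tier_extMap_add_one (hμ : IsCollapsing k μ) {n : ℕ} (h₁ : 2 ≤ n)
    (h₂ : n ≤ 2 * k + 1) : tier μ n = tier μ (extMap μ n) + 1 := by
  have hpos : 1 ≤ tier μ n := by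
    rw [Nat.one_le_iff_ne_zero, tier, Ne, Nat.sInf_eq_zero, not_or]
    refine ⟨by simp only [Set.mem_ofPred_eq, Function.iterate_zero, id]; omega, ?_⟩
    exact Set.nonempty_iff_ne_empty.1 (hμ.exists_iterate_eq_one (by omega) h₂)
  unfold tier at hpos ⊢
  rw [← Nat.sInf_add hpos]
  simp only [Function.iterate_succ_apply]

theorem IsCollapsing.tier_two_mul (hμ : IsCollapsing k μ) {l : ℕ} (hl : InDom k l) :
    tier μ (2 * l) = tier μ (μ (2 * l)) + 1 := by
  have := hμ.tier_eq_tier_extMap_add_one (n := 2 * l) (by have := hl.1; omega)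
    (by have := hl.2; omega)
  rwa [extMap_two_mul] at this

end Tier

theorem tier_comp {μ : ℕ → ℕ} {g : Equiv.Perm ℕ} (hg₁ : g 1 = 1)
    (hg : ∀ n, extMap μ (g n) = extMap μ n) (n : ℕ) :
    tier (fun x => g (μ x)) n = tier μ n := by
  have hsemi : Function.Semiconj (extMap μ) (extMap fun x => g (μ x)) (extMap μ) := fun x => by
    rw [extMap_comp (⇑g) μ, hg]
  have key : ∀ q, (extMap fun x => g (μ x))^[q + 1] n = g ((extMap μ)^[q + 1] n) := fun q => by
    rw [Function.iterate_succ_apply', extMap_comp (⇑g) μ, hsemi.iterate_right q,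
      Function.iterate_succ_apply]
  unfold tier
  congr 1
  ext (_ | q)
  · rfl
  · simp only [Set.mem_ofPred_eq, key, g.injective.eq_iff' hg₁]

/-- The order on parents that the tamedness conditions impose on their children. -/
def ParentLT (μ : ℕ → ℕ) (sgn : ℕ → Bool) (p q : ℕ) : Prop :=
  tier μ p < tier μ q ∨
  tier μ p = tier μ q ∧ extMap μ p = extMap μ q ∧ extSgn sgn p = extSgn sgn q ∧ p < q ∨
  tier μ p = tier μ q ∧ extMap μ p = extMap μ q ∧ extSgn sgn p = true ∧ extSgn sgn q = false ∨
  tier μ p = tier μ q ∧ extMap μ p ≠ extMap μ q ∧ p < q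

theorem parentLT_or_parentLT (μ : ℕ → ℕ) (sgn : ℕ → Bool) {p q : ℕ} (hpq : p ≠ q) :
    ParentLT μ sgn p q ∨ ParentLT μ sgn q p := by
  unfold ParentLT
  cases extSgn sgn p <;> cases extSgn sgn q <;> grind

section Tamed

variable {k : ℕ} {μ : ℕ → ℕ} {sgn : ℕ → Bool}

theorem Tamed.lt_of_parentLT (ht : Tamed k μ sgn) (hμ : IsCollapsing k μ) {l r : ℕ}
    (hl : InDom k l) (hr : InDom k r) (h : ParentLT μ sgn (μ (2 * l)) (μ (2 * r))) : l < r := by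
  have htl := hμ.tier_two_mul hl
  have htr := hμ.tier_two_mul hr
  obtain ⟨t₁, t₂, t₃, t₄⟩ := ht
  simp only [extMap_two_mul] at t₂ t₃ t₄
  rcases h with h | ⟨h₁, h₂, h₃, h₄⟩ | ⟨h₁, h₂, h₃, h₄⟩ | ⟨h₁, h₂, h₄⟩
  · have := t₁ l r hl hr (by omega)
    omega
  · have := t₂ l r hl hr (by omega) h₂ h₃ h₄
    omega
  · have := t₃ l r hl hr (by omega) h₂ h₃ h₄
    omega
  · have := t₄ l r hl hr (by omega) h₂ h₄
    omega

theorem Tamed.fiber_lt_fiber (ht : Tamed k μ sgn) (hμ : IsCollapsing k μ) {a b a' b' : ℕ}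
    (ha : InDom k a) (hb : InDom k b) (ha' : InDom k a') (hb' : InDom k b') (hab : a < b)
    (hne : μ (2 * a) ≠ μ (2 * b)) (hfa : μ (2 * a') = μ (2 * a)) (hfb : μ (2 * b') = μ (2 * b)) :
    a' < b' := by
  rcases parentLT_or_parentLT μ sgn hne with h | h
  · exact ht.lt_of_parentLT hμ ha' hb' (by rwa [hfa, hfb])
  · exact absurd (ht.lt_of_parentLT hμ hb ha h) (by omega)

end Tamed

section Reference

variable (k : ℕ) (μ : ℕ → ℕ) (sgn : ℕ → Bool)

noncomputable def refPerm : Equiv.Perm ℕ := pairPerm (sortPerm k μ sgn)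

/-- `(refMap, refSgn) = W(refPerm⁻¹)(μ, sgn)` is the reference pair of the class of `(μ, sgn)`. -/
noncomputable def refMap (n : ℕ) : ℕ := (refPerm k μ sgn).symm (μ n)

noncomputable def refSgn (n : ℕ) : Bool := sgn (refPerm k μ sgn n)

theorem refPerm_two_mul (m : ℕ) : refPerm k μ sgn (2 * m) = 2 * sortPerm k μ sgn m :=
  pairPerm_two_mul _ m

theorem extPerm_refPerm : ExtPerm k (refPerm k μ sgn) :=
  (isFiberPerm_sortPerm k μ sgn).extPerm_pairPerm

theorem refPerm_symm_one : (refPerm k μ sgn).symm 1 = 1 := by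
  rw [refPerm, pairPerm_symm, pairPerm_apply,
    (isFiberPerm_sortPerm k μ sgn).symm.1 _ fun h => by unfold InDom at h; omega]

theorem extMap_refPerm_symm (n : ℕ) : extMap μ ((refPerm k μ sgn).symm n) = extMap μ n :=
  (isFiberPerm_sortPerm k μ sgn).symm.extMap_pairPerm n

theorem tier_refMap (n : ℕ) : tier (refMap k μ sgn) n = tier μ n :=
  tier_comp (refPerm_symm_one k μ sgn) (extMap_refPerm_symm k μ sgn) n

theorem extMap_extMap_refMap (n : ℕ) : extMap (refMap k μ sgn) (extMap (refMap k μ sgn) n) =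
    (refPerm k μ sgn).symm (extMap μ (extMap μ n)) := by
  unfold refMap
  rw [extMap_comp (⇑(refPerm k μ sgn).symm) μ, extMap_comp (⇑(refPerm k μ sgn).symm) μ,
    extMap_refPerm_symm]

theorem extSgn_refSgn_refMap (n : ℕ) :
    extSgn (refSgn k μ sgn) (refMap k μ sgn n) = extSgn sgn (μ n) := by
  unfold refSgn refMap refPerm
  rw [extSgn_pairPerm, Equiv.apply_symm_apply]

variable {k μ sgn}

theorem sortPerm_lt_sortPerm (hμ : IsCollapsing k μ) (ht : Tamed k μ sgn) {i j : ℕ} (hij : i < j)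
    (hs : μ (2 * i) = μ (2 * j) → sgn (2 * sortPerm k μ sgn i) = sgn (2 * sortPerm k μ sgn j)) :
    sortPerm k μ sgn i < sortPerm k μ sgn j := by
  have hτ := isFiberPerm_sortPerm k μ sgn
  by_cases hi : InDom k i <;> by_cases hj : InDom k j
  · by_cases hf : μ (2 * i) = μ (2 * j)
    · exact (signLT_iff.1 (signLT_sortPerm k μ sgn hi hj hij hf)).2 (hs hf)
    · exact ht.fiber_lt_fiber hμ hi hj (hτ.inDom hi) (hτ.inDom hj) hij hf (hτ.2 i) (hτ.2 j)
  · have := hτ.inDom hi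
    rw [hτ.1 j hj]
    unfold InDom at *
    omega
  · have := hτ.inDom hj
    rw [hτ.1 i hi]
    unfold InDom at *
    omega
  · rw [hτ.1 i hi, hτ.1 j hj]
    exact hij

theorem lt_of_refPerm_symm_lt (hμ : IsCollapsing k μ) (ht : Tamed k μ sgn) {a b : ℕ}
    (h : (refPerm k μ sgn).symm a < (refPerm k μ sgn).symm b)
    (hs : extMap μ a = extMap μ b → extSgn sgn a = extSgn sgn b) : a < b := by
  set a' := (refPerm k μ sgn).symm a
  set b' := (refPerm k μ sgn).symm b
  rw [← (refPerm k μ sgn).apply_symm_apply a, ← (refPerm k μ sgn).apply_symm_apply b]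
  refine pairPerm_lt_pairPerm _ h fun hlt => sortPerm_lt_sortPerm hμ ht hlt fun hf => ?_
  have hs' := hs (by rw [← extMap_refPerm_symm k μ sgn a, ← extMap_refPerm_symm k μ sgn b,
    extMap_eq, extMap_eq, hf])
  rwa [← (refPerm k μ sgn).apply_symm_apply a, ← (refPerm k μ sgn).apply_symm_apply b, extSgn_eq,
    extSgn_eq, refPerm, pairPerm_div_two, pairPerm_div_two] at hs'

theorem isCollapsing_refMap (hμ : IsCollapsing k μ) (ht : Tamed k μ sgn) :
    IsCollapsing k (refMap k μ sgn) := by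
  refine ⟨by rw [refMap, hμ.1, refPerm_symm_one], fun j hj₁ hj₂ => ?_⟩
  have hj : InDom k j := ⟨hj₁, hj₂⟩
  obtain ⟨hx₁, hx₂⟩ := hμ.2 j hj₁ hj₂
  have hτ := (isFiberPerm_sortPerm k μ sgn).symm
  have e₂ := hμ.tier_two_mul hj
  rw [refMap, refPerm, pairPerm_symm, pairPerm_apply]
  generalize μ (2 * j) = x at hx₁ hx₂ e₂ ⊢
  -- `refMap (2j)` is a fiber-mate of the parent `x`, so it has the tier of `x` and lies below `2j`.
  rcases (show x = 1 ∨ InDom k (x / 2) by unfold InDom; omega) with hx | hx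
  · rw [hx, hτ.1 _ fun h => by unfold InDom at h; omega]
    omega
  · have hm := hτ.inDom hx
    have := hx.1
    have := hm.1
    have hμm : μ (2 * (sortPerm k μ sgn).symm (x / 2)) = extMap μ x := by rw [hτ.2, extMap_eq]
    have e₁ := hμ.tier_two_mul hm
    have e₃ := hμ.tier_eq_tier_extMap_add_one (n := x) (by omega) (by omega)
    rw [hμm] at e₁
    have := ht.1 ((sortPerm k μ sgn).symm (x / 2)) j hm hj (by omega)
    constructor <;> omega

theorem tamed_refMap (hμ : IsCollapsing k μ) (ht : Tamed k μ sgn) :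
    Tamed k (refMap k μ sgn) (refSgn k μ sgn) := by
  refine ⟨fun l r hl hr h => ?_, fun l r hl hr h₁ h₂ h₃ h₄ => ?_,
    fun l r hl hr h₁ h₂ h₃ h₄ => ?_, fun l r hl hr h₁ h₂ h₄ => ?_⟩
  · rw [tier_refMap, tier_refMap] at h
    exact ht.1 l r hl hr h
  · rw [tier_refMap, tier_refMap] at h₁
    rw [extMap_extMap_refMap, extMap_extMap_refMap, Equiv.apply_eq_iff_eq] at h₂
    rw [extSgn_refSgn_refMap, extSgn_refSgn_refMap] at h₃
    exact ht.2.1 l r hl hr h₁ h₂ h₃ (lt_of_refPerm_symm_lt hμ ht h₄ fun _ => h₃)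
  · rw [tier_refMap, tier_refMap] at h₁
    rw [extMap_extMap_refMap, extMap_extMap_refMap, Equiv.apply_eq_iff_eq] at h₂
    rw [extSgn_refSgn_refMap] at h₃ h₄
    exact ht.2.2.1 l r hl hr h₁ h₂ h₃ h₄
  · rw [tier_refMap, tier_refMap] at h₁
    rw [extMap_extMap_refMap, extMap_extMap_refMap, Ne, Equiv.apply_eq_iff_eq] at h₂
    refine ht.2.2.2 l r hl hr h₁ h₂ (lt_of_refPerm_symm_lt hμ ht h₄ fun h => (h₂ ?_).elim)
    rwa [extMap_two_mul, extMap_two_mul]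

theorem isReference_refMap (hμ : IsCollapsing k μ) (ht : Tamed k μ sgn) :
    IsReference k (refMap k μ sgn) (refSgn k μ sgn) := by
  refine ⟨tamed_refMap hμ ht, fun l r hl hr hlr hf hs => ?_⟩
  rw [refMap, refMap, (refPerm k μ sgn).symm.injective.eq_iff] at hf
  rw [refSgn, refPerm_two_mul] at hs ⊢
  exact (signLT_iff.1 (signLT_sortPerm k μ sgn hl hr hlr hf)).1 hs

theorem allowable_refPerm : Allowable k (refMap k μ sgn) (refSgn k μ sgn) (refPerm k μ sgn) := by
  refine ⟨extPerm_refPerm k μ sgn, fun l _ => ?_, fun l r hl hr hlr hf hs => ?_⟩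
  · rw [refMap, refMap, refPerm_two_mul, (isFiberPerm_sortPerm k μ sgn).2]
  · rw [refMap, refMap, (refPerm k μ sgn).symm.injective.eq_iff] at hf
    rw [refSgn, refSgn, refPerm_two_mul, refPerm_two_mul] at hs
    rw [refPerm_two_mul, refPerm_two_mul]
    have := (signLT_iff.1 (signLT_sortPerm k μ sgn hl hr hlr hf)).2 hs
    omega

theorem wildMoveEq_refPerm :
    WildMoveEq k (refPerm k μ sgn) (refMap k μ sgn) (refSgn k μ sgn) μ sgn :=
  ⟨fun _ _ => ((refPerm k μ sgn).apply_symm_apply _).symm, fun _ _ => rfl⟩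

theorem eq_refPerm {μ' : ℕ → ℕ} {sgn' : ℕ → Bool} {ρ : Equiv.Perm ℕ}
    (href : IsReference k μ' sgn') (hall : Allowable k μ' sgn' ρ)
    (hwm : WildMoveEq k ρ μ' sgn' μ sgn) : ρ = refPerm k μ sgn := by
  choose! τ hτ hρτ using fun l hl => (hall.1.2 l hl).1
  have hfib (l : ℕ) (hl : InDom k l) : μ (2 * τ l) = μ (2 * l) := by
    rw [hwm.1 _ (hτ l hl), ← hρτ l hl, hall.2.1 l hl, ← hwm.1 l hl]
  have hinj (a b : ℕ) (ha : InDom k a) (hb : InDom k b) (h : τ a = τ b) : a = b := by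
    have := ρ.injective ((hρτ a ha).trans (h ▸ (hρτ b hb).symm))
    omega
  have hmono (l r : ℕ) (hl : InDom k l) (hr : InDom k r) (hlr : l < r)
      (hf : μ (2 * l) = μ (2 * r)) : SignLT (fun x => sgn (2 * x)) (τ l) (τ r) := by
    have hf' : μ' (2 * l) = μ' (2 * r) := ρ.injective (by rw [← hwm.1 l hl, ← hwm.1 r hr, hf])
    rw [signLT_iff, ← hρτ l hl, ← hρτ r hr, hwm.2 l hl, hwm.2 r hr]
    refine ⟨href.2 l r hl hr hlr hf', fun hs => ?_⟩
    have := hall.2.2 l r hl hr hlr hf' hs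
    rw [hρτ l hl, hρτ r hr] at this
    omega
  refine hall.1.ext (extPerm_refPerm k μ sgn) fun l hl => ?_
  rw [hρτ l hl, refPerm_two_mul,
    eq_sortPerm_of k μ sgn (fun m hm => ⟨hτ m hm, hfib m hm⟩) hinj hmono hl]

end Reference

/-- Every equivalence class of wildly relatable tamed pairs contains
a unique reference pair `(μ̂, ŝgn)`; moreover every pair `(μ, sgn)` of the class is
obtained from the reference pair by a unique allowable permutation,
`(μ, sgn) = W(ρ)(μ̂, ŝgn)`. -/
theorem stmt_11 (k : ℕ) (μ : ℕ → ℕ) (sgn : ℕ → Bool)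
    (hμ : IsCollapsing k μ) (ht : Tamed k μ sgn) :
    ∃ μh : ℕ → ℕ, ∃ sh : ℕ → Bool,
      IsCollapsing k μh ∧ IsReference k μh sh ∧ WildRel k μh sh μ sgn ∧
      (∀ μh' : ℕ → ℕ, ∀ sh' : ℕ → Bool,
        IsCollapsing k μh' → IsReference k μh' sh' → WildRel k μh' sh' μ sgn →
        ∀ l, InDom k l → μh' (2*l) = μh (2*l) ∧ sh' (2*l) = sh (2*l)) ∧
      (∃ ρ, Allowable k μh sh ρ ∧ WildMoveEq k ρ μh sh μ sgn ∧
        ∀ ρ', Allowable k μh sh ρ' → WildMoveEq k ρ' μh sh μ sgn → ρ' = ρ) := by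
  have hall := allowable_refPerm (k := k) (μ := μ) (sgn := sgn)
  have hwm := wildMoveEq_refPerm (k := k) (μ := μ) (sgn := sgn)
  refine ⟨refMap k μ sgn, refSgn k μ sgn, isCollapsing_refMap hμ ht, isReference_refMap hμ ht,
    ⟨_, hall, hwm⟩, fun μ' sgn' _ href ⟨ρ, hall', hwm'⟩ l hl => ?_,
    ⟨_, hall, hwm, fun ρ hall' hwm' => eq_refPerm (isReference_refMap hμ ht) hall' hwm'⟩⟩
  obtain rfl := eq_refPerm href hall' hwm'
  exact ⟨(Equiv.eq_symm_apply _).2 (hwm'.1 l hl).symm, (hwm'.2 l hl).symm⟩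
end
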